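/- arXiv:2603.23467 — 5 statements merged into one kernel-verified Lean document; each statement's English description precedes it below -/
import Mathlib

section
/- Every norm on V admits an orthogonal basis: for every norm ‖·‖ on V there exists a basis (e_1,…,e_N) of V such that ‖∑_i a_i e_i‖ = max_i |a_i|·‖e_i‖ for all a_1,…,a_N ∈ K. -/
open scoped BigOperators

/-- A (nonarchimedean) norm on a `K`-vector space `V`: a function `‖·‖ : V → ℝ≥0`
with `‖v‖ = 0 ↔ v = 0`, `‖a • v‖ = |a|·‖v‖` and `‖v + w‖ ≤ max ‖v‖ ‖w‖`. -/
def IsVecNorm (K : Type*) [NormedField K] {V : Type*} [AddCommGroup V] [Module K V]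
    (n : V → ℝ) : Prop :=
  (∀ v : V, 0 ≤ n v) ∧ (∀ v : V, n v = 0 ↔ v = 0) ∧
  (∀ (a : K) (v : V), n (a • v) = ‖a‖ * n v) ∧
  (∀ v w : V, n (v + w) ≤ max (n v) (n w))

/-- A basis `e` of `V` is orthogonal for a norm `n` if
`n (∑ i, a i • e i) = max_i |a i| · n (e i)` for all scalars `a`. -/
def IsOrthogonalBasis {K : Type*} [NormedField K] {V : Type*} [AddCommGroup V] [Module K V]
    {N : ℕ} (n : V → ℝ) (e : Module.Basis (Fin N) K V) : Prop :=
  ∀ a : Fin N → K, n (∑ i, a i • e i) = ⨆ i, ‖a i‖ * n (e i)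


open Module

section Helpers

variable {K : Type*} [NormedField K] {V : Type*} [AddCommGroup V] [Module K V]
  {n : V → ℝ} (hn : IsVecNorm K n)

include hn

lemma vn_nonneg (v : V) : 0 ≤ n v := hn.1 v

lemma vn_zero : n (0 : V) = 0 := (hn.2.1 0).2 rfl

lemma vn_neg (v : V) : n (-v) = n v := by
  have := hn.2.2.1 (-1 : K) v
  simpa using this

lemma vn_add_le (v w : V) : n (v + w) ≤ max (n v) (n w) := hn.2.2.2 v w

lemma vn_sub_le (v w : V) : n (v - w) ≤ max (n v) (n w) := by
  rw [sub_eq_add_neg]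
  simpa [vn_neg hn] using vn_add_le hn v (-w)

/-- ultrametric equality when norms differ -/
lemma vn_add_eq_of_lt {v w : V} (h : n w < n v) : n (v + w) = n v := by
  refine le_antisymm ((vn_add_le hn v w).trans (by simp [le_of_lt h])) ?_
  have h2 : n v ≤ max (n (v + w)) (n w) := by
    have := vn_sub_le hn (v + w) w
    simpa using this
  rcases max_cases (n (v + w)) (n w) with ⟨he, _⟩ | ⟨he, _⟩
  · rw [he] at h2; exact h2
  · rw [he] at h2; exact absurd h2 (not_le_of_gt h)

lemma vn_sum_le {ι : Type*} (s : Finset ι) (f : ι → V) {B : ℝ} (hB : 0 ≤ B)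
    (h : ∀ i ∈ s, n (f i) ≤ B) : n (∑ i ∈ s, f i) ≤ B := by
  classical
  induction s using Finset.induction_on with
  | empty => simpa [vn_zero hn] using hB
  | @insert a s' hx ih =>
    rw [Finset.sum_insert hx]
    refine (vn_add_le hn _ _).trans (max_le (h a (Finset.mem_insert_self a s')) ?_)
    exact ih fun i hi => h i (Finset.mem_insert_of_mem hi)

lemma vn_sum_lt {ι : Type*} (s : Finset ι) (f : ι → V) {B : ℝ} (hB : 0 < B)
    (h : ∀ i ∈ s, n (f i) < B) : n (∑ i ∈ s, f i) < B := by
  classical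
  induction s using Finset.induction_on with
  | empty => simpa [vn_zero hn] using hB
  | @insert a s' hx ih =>
    rw [Finset.sum_insert hx]
    refine lt_of_le_of_lt (vn_add_le hn _ _) (max_lt (h a (Finset.mem_insert_self a s')) ?_)
    exact ih fun i hi => h i (Finset.mem_insert_of_mem hi)

lemma vn_sum_eq_of_unique_max {ι : Type*} [DecidableEq ι] (s : Finset ι) (f : ι → V) {i0 : ι}
    (hi0 : i0 ∈ s) (h : ∀ j ∈ s, j ≠ i0 → n (f j) < n (f i0)) :
    n (∑ i ∈ s, f i) = n (f i0) := by
  have hpos : 0 < n (f i0) ∨ s = {i0} := by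
    by_cases hs : s = {i0}
    · exact Or.inr hs
    · left
      obtain ⟨j, hj, hji⟩ : ∃ j ∈ s, j ≠ i0 := by
        by_contra hc
        push_neg at hc
        exact hs (Finset.eq_singleton_iff_unique_mem.2 ⟨hi0, fun x hx => hc x hx⟩)
      exact lt_of_le_of_lt (vn_nonneg hn (f j)) (h j hj hji)
  rcases hpos with hpos | hs
  · rw [← Finset.add_sum_erase s f hi0]
    refine vn_add_eq_of_lt hn ?_
    exact vn_sum_lt hn _ _ hpos fun j hj =>
      h j (Finset.mem_of_mem_erase hj) (Finset.ne_of_mem_erase hj)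
  · rw [hs, Finset.sum_singleton]

end Helpers

section Coset

open Module

lemma vn_coset {K : Type*} [NormedField K] {V : Type*} [AddCommGroup V] [Module K V]
    [FiniteDimensional K V] {n : V → ℝ} (hn : IsVecNorm K n) {q : ℝ} (hq : 0 < q)
    (hd : ∀ a : K, a ≠ 0 → ∃ m : ℤ, ‖a‖ = q ^ m)
    {M : ℕ} (hM : finrank K V < M) (u : Fin M → V) (hu : ∀ i, u i ≠ 0) :
    ∃ i j, i ≠ j ∧ ∃ m : ℤ, n (u i) = q ^ m * n (u j) := by
  classical
  by_contra hcon
  push_neg at hcon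
  have hupos : ∀ i, 0 < n (u i) := fun i =>
    lt_of_le_of_ne (hn.1 (u i)) (fun h => hu i ((hn.2.1 (u i)).1 h.symm))
  have hli : LinearIndependent K u := by
    rw [Fintype.linearIndependent_iff]
    intro g hg
    by_contra hgz
    push_neg at hgz
    obtain ⟨i1, hi1⟩ := hgz
    set T : Finset (Fin M) := Finset.univ.filter (fun i => g i ≠ 0) with hT
    have hTne : T.Nonempty := ⟨i1, by simp [hT, hi1]⟩
    obtain ⟨i0, hi0T, hi0max⟩ := Finset.exists_max_image T (fun i => ‖g i‖ * n (u i)) hTne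
    have hg0 : g i0 ≠ 0 := by simpa [hT] using hi0T
    have hstrict : ∀ j ∈ T, j ≠ i0 → n (g j • u j) < n (g i0 • u i0) := by
      intro j hjT hji
      have hgj : g j ≠ 0 := by simpa [hT] using hjT
      rw [hn.2.2.1, hn.2.2.1]
      refine lt_of_le_of_ne (hi0max j hjT) ?_
      intro heq
      obtain ⟨a, ha⟩ := hd (g j) hgj
      obtain ⟨b, hb⟩ := hd (g i0) hg0
      refine hcon i0 j (Ne.symm hji) (a - b) ?_
      have hqb : (0:ℝ) < q ^ b := zpow_pos hq b
      have hqa : (0:ℝ) < q ^ a := zpow_pos hq a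
      have h1 : q ^ a * n (u j) = q ^ b * n (u i0) := by rw [← hb, ← ha]; exact heq
      rw [zpow_sub₀ (ne_of_gt hq)]
      field_simp
      linarith [h1]
    have hsum : ∑ i ∈ T, g i • u i = 0 := by
      rw [← hg]
      exact Finset.sum_subset (Finset.subset_univ T) (fun x _ hx => by
        have : g x = 0 := by simpa [hT] using hx
        simp [this])
    have hmax := vn_sum_eq_of_unique_max hn T (fun i => g i • u i) hi0T hstrict
    rw [hsum, vn_zero hn, hn.2.2.1] at hmax
    have : (0:ℝ) < ‖g i0‖ * n (u i0) :=
      mul_pos (norm_pos_iff.2 hg0) (hupos i0)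
    linarith
  have := hli.fintype_card_le_finrank
  simp only [Fintype.card_fin] at this
  omega

lemma fract_logb_eq {q s t : ℝ} (hq : 1 < q) (ht : 0 < t) (m : ℤ)
    (h : s = q ^ m * t) : Int.fract (Real.logb q s) = Int.fract (Real.logb q t) := by
  have hq0 : (0:ℝ) < q := lt_trans one_pos hq
  have hqm : (0:ℝ) < q ^ m := zpow_pos hq0 m
  subst h
  rw [Real.logb_mul (ne_of_gt hqm) (ne_of_gt ht)]
  have : Real.logb q (q ^ m) = (m : ℝ) := by
    rw [← Real.rpow_intCast q m, Real.logb_rpow hq0 (ne_of_gt hq)]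
  rw [this, Int.fract_intCast_add]

lemma logb_inj {q s t : ℝ} (hq : 1 < q) (hs : 0 < s) (ht : 0 < t)
    (h1 : Int.fract (Real.logb q s) = Int.fract (Real.logb q t))
    (h2 : ⌊Real.logb q s⌋ = ⌊Real.logb q t⌋) : s = t := by
  have hq0 : (0:ℝ) < q := lt_trans one_pos hq
  have hlog : Real.logb q s = Real.logb q t := by
    rw [← Int.floor_add_fract (Real.logb q s), ← Int.floor_add_fract (Real.logb q t), h1, h2]
  rw [← Real.rpow_logb hq0 (ne_of_gt hq) hs, ← Real.rpow_logb hq0 (ne_of_gt hq) ht, hlog]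

end Coset

section Main

open Module

lemma sup_snoc {N : ℕ} (g : Fin (N + 1) → ℝ) (hg : ∀ i, 0 ≤ g i) :
    (⨆ i, g i) = max (⨆ i : Fin N, g i.castSucc) (g (Fin.last N)) := by
  have hbdd : BddAbove (Set.range g) := (Set.finite_range g).bddAbove
  have hbdd2 : BddAbove (Set.range fun i : Fin N => g i.castSucc) := (Set.finite_range _).bddAbove
  refine le_antisymm (ciSup_le ?_) (max_le ?_ (le_ciSup hbdd (Fin.last N)))
  · intro i
    refine Fin.lastCases ?_ ?_ i
    · exact le_max_right _ _
    · intro j; exact le_trans (le_ciSup hbdd2 j) (le_max_left _ _)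
  · rcases isEmpty_or_nonempty (Fin N) with he | hne
    · rw [Real.iSup_of_isEmpty]
      exact Real.iSup_nonneg hg
    · exact ciSup_le fun j => le_ciSup hbdd j.castSucc

lemma vn_main {K : Type*} [NontriviallyNormedField K] [CompleteSpace K]
    {q : ℝ} (hq : 1 < q) (hd : ∀ a : K, a ≠ 0 → ∃ m : ℤ, ‖a‖ = q ^ m) :
    ∀ (N : ℕ) (V : Type*) (i1 : AddCommGroup V) (i2 : Module K V)
      (_fd : FiniteDimensional K V), finrank K V = N →
      ∀ n : V → ℝ, IsVecNorm K n → ∃ e : Basis (Fin N) K V, IsOrthogonalBasis n e := by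
  intro N
  induction N with
  | zero =>
    intro V i1 i2 fd hdim n hn
    haveI : Subsingleton V := (Module.finrank_zero_iff (R := K)).1 hdim
    refine ⟨Basis.empty V, fun a => ?_⟩
    have h1 : (∑ i : Fin 0, a i • (Basis.empty V : Basis (Fin 0) K V) i) = 0 := by simp
    rw [h1, vn_zero hn, Real.iSup_of_isEmpty]
  | succ N IH =>
    intro V i1 i2 fd hdim n hn
    classical
    obtain ⟨hnn, h0, hsm, hadd⟩ := hn
    have hn' : IsVecNorm K n := ⟨hnn, h0, hsm, hadd⟩
    have hq0 : (0:ℝ) < q := lt_trans one_pos hq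
    -- normed space structure on V induced by n
    letI : NormedAddCommGroup V := AddGroupNorm.toNormedAddCommGroup
      { toFun := n
        map_zero' := vn_zero hn'
        add_le' := fun v w => (hadd v w).trans
          (max_le (le_add_of_nonneg_right (hnn w)) (le_add_of_nonneg_left (hnn v)))
        neg' := vn_neg hn'
        eq_zero_of_map_eq_zero' := fun v h => (h0 v).1 h }
    letI : NormedSpace K V := ⟨fun a v => le_of_eq (hsm a v)⟩
    have hnorm : ∀ x : V, ‖x‖ = n x := fun x => rfl
    -- the hyperplane W and the vector v
    have hb : Basis (Fin (N + 1)) K V := Module.finBasisOfFinrankEq K V hdim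
    set v : V := hb (Fin.last N) with hvdef
    set W : Submodule K V := Submodule.span K (Set.range (fun i : Fin N => hb i.castSucc))
      with hWdef
    haveI : FiniteDimensional K W := FiniteDimensional.span_of_finite K (Set.finite_range _)
    have hWrank : finrank K W = N := by
      have hli : LinearIndependent K (fun i : Fin N => hb i.castSucc) :=
        hb.linearIndependent.comp _ (Fin.castSucc_injective N)
      simpa using finrank_span_eq_card hli
    have hvW : v ∉ W := by
      have hnr : Fin.last N ∉ Set.range (Fin.castSucc (n := N)) := by
        rintro ⟨i, hi⟩
        exact absurd hi (ne_of_lt (Fin.castSucc_lt_last i))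
      have h1 := hb.linearIndependent.notMem_span_image (s := Set.range Fin.castSucc) hnr
      have h2 : (hb '' Set.range Fin.castSucc) = Set.range (fun i : Fin N => hb i.castSucc) := by
        rw [← Set.range_comp]; rfl
      rw [h2] at h1
      exact h1
    -- the norm restricted to W and its orthogonal basis
    set nW : W → ℝ := fun w => n w with hnWdef
    have hnW : IsVecNorm K nW := by
      refine ⟨fun w => hnn w, fun w => (h0 (w : V)).trans ZeroMemClass.coe_eq_zero,
        fun a w => ?_, fun x y => ?_⟩
      · show n ((a • w : W) : V) = ‖a‖ * n (w : V)
        rw [Submodule.coe_smul]; exact hsm a w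
      · show n ((x + y : W) : V) ≤ _
        rw [Submodule.coe_add]; exact hadd x y
    obtain ⟨eW, heW⟩ := IH W inferInstance inferInstance inferInstance hWrank nW hnW
    -- the distance and its positivity
    set S : Set ℝ := Set.range (fun w : W => n (v - w)) with hSdef
    have hSne : S.Nonempty := ⟨n (v - ((0 : W) : V)), ⟨0, rfl⟩⟩
    have hSbd : BddBelow S := ⟨0, by rintro r ⟨w, rfl⟩; exact hnn _⟩
    set d : ℝ := sInf S with hddef
    have hd_le : ∀ w : W, d ≤ n (v - w) := fun w => csInf_le hSbd ⟨w, rfl⟩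
    have hnvS : n v ∈ S := ⟨0, by simp⟩
    have hdnv : d ≤ n v := csInf_le hSbd hnvS
    have hd0 : 0 ≤ d := le_csInf hSne (by rintro r ⟨w, rfl⟩; exact hnn _)
    have hdpos : 0 < d := by
      rcases lt_or_eq_of_le hd0 with h | h
      · exact h
      · exfalso
        have hvcl : v ∈ closure (W : Set V) := by
          rw [Metric.mem_closure_iff]
          intro ε hε
          obtain ⟨r, ⟨w, rfl⟩, hr⟩ := exists_lt_of_csInf_lt hSne (show sInf S < ε by
            rw [← hddef, ← h]; exact hε)
          exact ⟨w, w.2, by rw [dist_eq_norm, hnorm]; exact hr⟩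
        rw [W.closed_of_finiteDimensional.closure_eq] at hvcl
        exact hvW hvcl
    have hSpos : ∀ r ∈ S, 0 < r := fun r hr => lt_of_lt_of_le hdpos (csInf_le hSbd hr)
    -- finiteness of value classes
    set c : ℝ → ℝ := fun s => Int.fract (Real.logb q s) with hcdef
    have hcim : (c '' S).Finite := by
      by_contra hinf
      obtain ⟨T, hTsub, hTcard⟩ := Set.Infinite.exists_subset_card_eq hinf (N + 2)
      have hch : ∀ r : {x // x ∈ T}, ∃ w : W, c (n (v - w)) = (r : ℝ) := by
        rintro ⟨r, hr⟩
        obtain ⟨s, hsS, rfl⟩ := hTsub hr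
        obtain ⟨w, rfl⟩ := hsS
        exact ⟨w, rfl⟩
      choose wt hwt using hch
      have eqv : {x // x ∈ T} ≃ Fin (N + 2) := Finset.equivFinOfCardEq hTcard
      set u : Fin (N + 2) → V := fun i => v - (wt (eqv.symm i) : V) with hudef
      have hu : ∀ i, u i ≠ 0 := by
        intro i h
        rw [hudef] at h
        simp only [sub_eq_zero] at h
        exact hvW (h ▸ (wt (eqv.symm i)).2)
      obtain ⟨i, j, hij, m, hm⟩ := vn_coset hn' hq0 hd
        (show finrank K V < N + 2 by rw [hdim]; omega) u hu
      have hposj : 0 < n (u j) :=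
        lt_of_le_of_ne (hnn _) (fun h => hu j ((h0 _).1 h.symm))
      have hcc : c (n (u i)) = c (n (u j)) := fract_logb_eq hq hposj m hm
      rw [hudef] at hcc
      simp only [] at hcc
      rw [hwt (eqv.symm i), hwt (eqv.symm j)] at hcc
      exact hij (eqv.symm.injective (Subtype.ext hcc) ▸ rfl)
    -- finiteness of S ∩ [d, n v]
    set F : Set ℝ := S ∩ Set.Icc d (n v) with hFdef
    have hnvpos : 0 < n v := lt_of_lt_of_le hdpos hdnv
    have hFfin : F.Finite := by
      have hfin2 : ((fun s => (c s, ⌊Real.logb q s⌋)) '' F).Finite := by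
        refine Set.Finite.subset (hcim.prod (Set.finite_Icc ⌊Real.logb q d⌋ ⌊Real.logb q (n v)⌋)) ?_
        rintro p ⟨s, ⟨hsS, hs1, hs2⟩, rfl⟩
        have hspos : 0 < s := hSpos s hsS
        refine ⟨⟨s, hsS, rfl⟩, ?_, ?_⟩
        · exact Int.floor_mono ((Real.logb_le_logb hq hdpos hspos).2 hs1)
        · exact Int.floor_mono ((Real.logb_le_logb hq hspos hnvpos).2 hs2)
      refine Set.Finite.of_finite_image hfin2 ?_
      rintro s hs t ht hst
      exact logb_inj hq (hSpos s hs.1) (hSpos t ht.1)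
        (congrArg Prod.fst hst) (congrArg Prod.snd hst)
    -- attainment of the infimum
    have hFne : F.Nonempty := ⟨n v, hnvS, hdnv, le_refl _⟩
    have hFmem : sInf F ∈ F := hFne.csInf_mem hFfin
    have hdF : d = sInf F := by
      refine le_antisymm (le_csInf hFne fun r hr => hr.2.1) ?_
      refine le_csInf hSne fun r hr => ?_
      by_cases hrv : r ≤ n v
      · exact csInf_le hFfin.bddBelow ⟨hr, csInf_le hSbd hr, hrv⟩
      · exact le_trans (csInf_le hFfin.bddBelow ⟨hnvS, hdnv, le_refl _⟩) (le_of_lt (not_le.mp hrv))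
    have hdS : d ∈ S := by rw [hdF]; exact hFmem.1
    obtain ⟨w0, hw0⟩ := hdS
    set e' : V := v - (w0 : V) with he'def
    have hne' : n e' = d := hw0
    -- key orthogonality of e' against W
    have key : ∀ (x : W) (cc : K), n ((x : V) + cc • e') = max (n (x : V)) (‖cc‖ * n e') := by
      intro x cc
      rcases eq_or_ne cc 0 with rfl | hcc
      · simp only [norm_zero, zero_smul, add_zero, zero_mul]
        exact (max_eq_left (hnn _)).symm
      · have hkey1 : ‖cc‖ * d ≤ n ((x : V) + cc • e') := by
          have he : (x : V) + cc • e' = cc • (cc⁻¹ • (x : V) + e') := by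
            rw [smul_add, smul_smul, mul_inv_cancel₀ hcc, one_smul]
          rw [he, hsm]
          refine mul_le_mul_of_nonneg_left ?_ (norm_nonneg cc)
          have he2 : cc⁻¹ • (x : V) + e' = v - ((w0 - cc⁻¹ • x : W) : V) := by
            rw [Submodule.coe_sub, Submodule.coe_smul, he'def]
            abel
          rw [he2]; exact hd_le _
        have h4 : n (cc • e') ≤ n ((x : V) + cc • e') := by rw [hsm, hne']; exact hkey1
        have hge2 : n (x : V) ≤ n ((x : V) + cc • e') := by
          have h3 : n (x : V) ≤ max (n ((x : V) + cc • e')) (n (cc • e')) := by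
            have h5 := vn_sub_le hn' ((x : V) + cc • e') (cc • e')
            rwa [add_sub_cancel_right] at h5
          exact h3.trans (max_le (le_refl _) h4)
        refine le_antisymm ((hadd _ _).trans ?_) (max_le hge2 ?_)
        · rw [hsm]
        · rw [← hsm]; exact h4
    -- the combined family
    set f : Fin (N + 1) → V := Fin.snoc (fun i => ((eW i : W) : V)) e' with hfdef
    have hcast : ∀ a : Fin N → K, ((∑ i, a i • eW i : W) : V) = ∑ i : Fin N, a i • ((eW i : W) : V) := by
      intro a
      simp
    have hfNorm : ∀ a : Fin (N + 1) → K, n (∑ i, a i • f i) =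
        max (n ((∑ i, a (Fin.castSucc i) • eW i : W) : V)) (‖a (Fin.last N)‖ * n e') := by
      intro a
      rw [Fin.sum_univ_castSucc]
      simp only [hfdef, Fin.snoc_castSucc, Fin.snoc_last]
      rw [← hcast, key]
    have hWnorm : ∀ a : Fin N → K, n ((∑ i, a i • eW i : W) : V) = ⨆ i, ‖a i‖ * n ((eW i : W) : V) := by
      intro a
      exact heW a
    -- linear independence
    have hlin : LinearIndependent K f := by
      rw [Fintype.linearIndependent_iff]
      intro g hg
      have h5 := hfNorm g
      rw [hg, vn_zero hn'] at h5
      have hA : n ((∑ i, g (Fin.castSucc i) • eW i : W) : V) = 0 :=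
        le_antisymm ((le_max_left _ _).trans_eq h5.symm) (hnn _)
      have hB : ‖g (Fin.last N)‖ * n e' = 0 :=
        le_antisymm ((le_max_right _ _).trans_eq h5.symm)
          (mul_nonneg (norm_nonneg _) (hnn _))
      have hgl : g (Fin.last N) = 0 := by
        rcases mul_eq_zero.1 hB with h | h
        · exact norm_eq_zero.1 h
        · exact absurd h (by rw [hne']; exact ne_of_gt hdpos)
      have hxW : (∑ i, g (Fin.castSucc i) • eW i : W) = 0 :=
        ZeroMemClass.coe_eq_zero.1 ((h0 _).1 hA)
      have hcoord := Fintype.linearIndependent_iff.1 eW.linearIndependent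
        (fun i => g (Fin.castSucc i)) hxW
      intro i
      refine Fin.lastCases ?_ ?_ i
      · exact hgl
      · exact hcoord
    have hcard : Fintype.card (Fin (N + 1)) = finrank K V := by
      rw [Fintype.card_fin, hdim]
    refine ⟨basisOfLinearIndependentOfCardEqFinrank hlin hcard, ?_⟩
    intro a
    rw [coe_basisOfLinearIndependentOfCardEqFinrank]
    rw [hfNorm a, hWnorm]
    rw [sup_snoc (fun i => ‖a i‖ * n (f i)) (fun i => mul_nonneg (norm_nonneg _) (hnn _))]
    congr 1
    · refine iSup_congr fun i => ?_
      simp only [hfdef, Fin.snoc_castSucc]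
    · simp only [hfdef, Fin.snoc_last]

end Main


theorem every_norm_has_orthogonal_basis
    (K : Type*) [NontriviallyNormedField K] [CompleteSpace K]
    (hultra : ∀ a b : K, ‖a + b‖ ≤ max ‖a‖ ‖b‖)
    (hdisc : ∃ q : ℝ, 1 < q ∧ ∀ a : K, a ≠ 0 → ∃ m : ℤ, ‖a‖ = q ^ m)
    (V : Type*) [AddCommGroup V] [Module K V]
    (N : ℕ) (hN : 1 ≤ N) (hdim : Module.finrank K V = N)
    (n : V → ℝ) (hn : IsVecNorm K n) :
    ∃ e : Module.Basis (Fin N) K V, IsOrthogonalBasis n e := by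
  obtain ⟨q, hq, hd⟩ := hdisc
  have fd : FiniteDimensional K V := FiniteDimensional.of_finrank_pos (by omega)
  exact vn_main hq hd N V inferInstance inferInstance fd hdim n hn
end

section
/- The Bruhat–Tits distance is well defined: if ‖·‖ and ‖·‖′ are norms on V and (e_1,…,e_N) and (f_1,…,f_N) are two bases of V, each orthogonal for both ‖·‖ and ‖·‖′, then ∑_{i=1}^N (log(‖e_i‖′/‖e_i‖))² = ∑_{i=1}^N (log(‖f_i‖′/‖f_i‖))². -/
open scoped BigOperators

private lemma sum_abs_bound (u : Multiset ℝ) : ∀ a ∈ u, a ≤ (u.map (fun r => |r|)).sum := by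
  intro a ha
  refine le_trans (le_abs_self a) (Multiset.single_le_sum ?_ _ (Multiset.mem_map_of_mem _ ha))
  intro x hx
  obtain ⟨y, _, rfl⟩ := Multiset.mem_map.1 hx
  exact abs_nonneg y

private lemma multiset_eq_of_cdf :
    ∀ (k : ℕ) (s t : Multiset ℝ), Multiset.card s = k →
    (∀ x : ℝ, Multiset.card (s.filter (· ≤ x)) = Multiset.card (t.filter (· ≤ x))) → s = t := by
  intro k
  induction k with
  | zero =>
    intro s t hs h
    have hs0 : s = 0 := Multiset.card_eq_zero.1 hs
    subst hs0
    by_contra ht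
    obtain ⟨b, hb⟩ := Multiset.exists_mem_of_ne_zero (Ne.symm ht)
    have h2 := h ((t.map (fun r => |r|)).sum)
    rw [Multiset.filter_eq_self.2 (sum_abs_bound t)] at h2
    simp only [Multiset.filter_zero, Multiset.card_zero] at h2
    have : t = 0 := Multiset.card_eq_zero.1 h2.symm
    rw [this] at hb; simp at hb
  | succ k ih =>
    intro s t hs h
    have hcard : Multiset.card s = Multiset.card t := by
      have h2 := h (((s + t).map (fun r => |r|)).sum)
      rwa [Multiset.filter_eq_self.2
          (fun a ha => sum_abs_bound _ a (Multiset.mem_add.2 (Or.inl ha))),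
        Multiset.filter_eq_self.2
          (fun a ha => sum_abs_bound _ a (Multiset.mem_add.2 (Or.inr ha)))] at h2
    have hsne : s ≠ 0 := by intro h0; rw [h0] at hs; simp at hs
    have htne : t ≠ 0 := by
      intro h0; rw [h0, Multiset.card_zero] at hcard; rw [hcard] at hs; simp at hs
    have hsF : s.toFinset.Nonempty := by
      obtain ⟨a, ha⟩ := Multiset.exists_mem_of_ne_zero hsne
      exact ⟨a, Multiset.mem_toFinset.2 ha⟩
    have htF : t.toFinset.Nonempty := by
      obtain ⟨a, ha⟩ := Multiset.exists_mem_of_ne_zero htne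
      exact ⟨a, Multiset.mem_toFinset.2 ha⟩
    set m := s.toFinset.min' hsF with hmdef
    set m' := t.toFinset.min' htF with hm'def
    have hms : m ∈ s := Multiset.mem_toFinset.1 (Finset.min'_mem _ _)
    have hm't : m' ∈ t := Multiset.mem_toFinset.1 (Finset.min'_mem _ _)
    have hmin : ∀ a ∈ s, m ≤ a := fun a ha => Finset.min'_le _ a (Multiset.mem_toFinset.2 ha)
    have hmin' : ∀ a ∈ t, m' ≤ a := fun a ha => Finset.min'_le _ a (Multiset.mem_toFinset.2 ha)
    have hbt : ∃ b ∈ t, b ≤ m := by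
      have h1 : t.filter (· ≤ m) ≠ 0 := by
        intro h0
        have h2 := h m
        rw [h0, Multiset.card_zero, Multiset.card_eq_zero] at h2
        have : m ∈ s.filter (· ≤ m) := Multiset.mem_filter.2 ⟨hms, le_refl m⟩
        rw [h2] at this; simp at this
      obtain ⟨b, hb⟩ := Multiset.exists_mem_of_ne_zero h1
      exact ⟨b, (Multiset.mem_filter.1 hb).1, (Multiset.mem_filter.1 hb).2⟩
    have has : ∃ a ∈ s, a ≤ m' := by
      have h1 : s.filter (· ≤ m') ≠ 0 := by
        intro h0
        have h2 := h m'
        rw [h0, Multiset.card_zero] at h2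
        have h3 : t.filter (· ≤ m') = 0 := Multiset.card_eq_zero.1 h2.symm
        have : m' ∈ t.filter (· ≤ m') := Multiset.mem_filter.2 ⟨hm't, le_refl m'⟩
        rw [h3] at this; simp at this
      obtain ⟨a, ha⟩ := Multiset.exists_mem_of_ne_zero h1
      exact ⟨a, (Multiset.mem_filter.1 ha).1, (Multiset.mem_filter.1 ha).2⟩
    obtain ⟨b, hbt', hbm⟩ := hbt
    obtain ⟨a, has', ham'⟩ := has
    have hmm' : m ≤ m' := le_trans (hmin a has') ham'
    have hbm2 : b = m := le_antisymm hbm (le_trans hmm' (hmin' b hbt'))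
    have hmt : m ∈ t := hbm2 ▸ hbt'
    -- erase m from both
    have hse : s = m ::ₘ s.erase m := (Multiset.cons_erase hms).symm
    have hte : t = m ::ₘ t.erase m := (Multiset.cons_erase hmt).symm
    have hcount : ∀ x : ℝ, Multiset.card ((s.erase m).filter (· ≤ x))
        = Multiset.card ((t.erase m).filter (· ≤ x)) := by
      intro x
      have h2 := h x
      rw [hse, hte, Multiset.filter_cons, Multiset.filter_cons, Multiset.card_add,
        Multiset.card_add] at h2
      omega
    have hk : Multiset.card (s.erase m) = k := by
      rw [Multiset.card_erase_of_mem hms, hs]; rfl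
    have := ih (s.erase m) (t.erase m) hk hcount
    rw [hse, hte, this]

open Module Submodule

private lemma count_mono {K : Type*} [NontriviallyNormedField K] {V : Type*} [AddCommGroup V]
    [Module K V] {N : ℕ} (hN : 1 ≤ N) (hdim : Module.finrank K V = N)
    {n n' : V → ℝ} (hn : IsVecNorm K n) (hn' : IsVecNorm K n')
    {e f : Basis (Fin N) K V}
    (he : IsOrthogonalBasis n e) (he' : IsOrthogonalBasis n' e)
    (hf : IsOrthogonalBasis n f) (hf' : IsOrthogonalBasis n' f) (t : ℝ) :
    (Finset.univ.filter (fun i => n' (e i) ≤ t * n (e i))).card ≤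
    (Finset.univ.filter (fun j => n' (f j) ≤ t * n (f j))).card := by
  classical
  haveI : Nonempty (Fin N) := ⟨⟨0, hN⟩⟩
  haveI : FiniteDimensional K V := Module.Finite.of_basis e
  -- positivity of norms on nonzero vectors
  have npos : ∀ v : V, v ≠ 0 → 0 < n v := fun v hv =>
    lt_of_le_of_ne (hn.1 v) (fun h0 => hv ((hn.2.1 v).1 h0.symm))
  have n'pos : ∀ v : V, v ≠ 0 → 0 < n' v := fun v hv =>
    lt_of_le_of_ne (hn'.1 v) (fun h0 => hv ((hn'.2.1 v).1 h0.symm))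
  set S := Finset.univ.filter (fun i => n' (e i) ≤ t * n (e i)) with hSdef
  set T := Finset.univ.filter (fun j => n' (f j) ≤ t * n (f j)) with hTdef
  by_contra hcon
  push_neg at hcon
  -- S is nonempty, so t > 0
  have hSne : S.Nonempty := Finset.card_pos.1 (lt_of_le_of_lt (Nat.zero_le _) hcon)
  obtain ⟨i0, hi0⟩ := hSne
  have hi0' : n' (e i0) ≤ t * n (e i0) := (Finset.mem_filter.1 hi0).2
  have ht : 0 < t := by
    have h1 : 0 < t * n (e i0) := lt_of_lt_of_le (n'pos _ (e.ne_zero i0)) hi0'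
    nlinarith [npos _ (e.ne_zero i0)]
  -- submodules
  set U : Submodule K V := span K (e '' ↑S) with hUdef
  set W : Submodule K V := span K (f '' ↑Tᶜ) with hWdef
  have hUrank : finrank K U = S.card := by
    have h1 : ((S.image e : Finset V) : Set V) = e '' ↑S := Finset.coe_image
    have h2 : LinearIndependent K ((↑) : ((S.image e : Finset V) : Set V) → V) := by
      rw [h1]
      exact (e.linearIndependent.linearIndepOn_id' rfl).mono (Set.image_subset_range e ↑S)
    have := finrank_span_finset_eq_card h2
    rw [h1] at this
    rw [hUdef, this, Finset.card_image_of_injective _ e.injective]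
  have hWrank : finrank K W = Tᶜ.card := by
    have h1 : ((Tᶜ.image f : Finset V) : Set V) = f '' ↑Tᶜ := Finset.coe_image
    have h2 : LinearIndependent K ((↑) : ((Tᶜ.image f : Finset V) : Set V) → V) := by
      rw [h1]
      exact (f.linearIndependent.linearIndepOn_id' rfl).mono (Set.image_subset_range f ↑Tᶜ)
    have := finrank_span_finset_eq_card h2
    rw [h1] at this
    rw [hWdef, this, Finset.card_image_of_injective _ f.injective]
  -- intersection is nonzero
  have hsum : finrank K ↥(U ⊔ W) + finrank K ↥(U ⊓ W) = S.card + Tᶜ.card := by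
    rw [Submodule.finrank_sup_add_finrank_inf_eq, hUrank, hWrank]
  have hle : finrank K ↥(U ⊔ W) ≤ N := hdim ▸ Submodule.finrank_le _
  have hTcard : Tᶜ.card = N - T.card := by
    rw [Finset.card_compl, Fintype.card_fin]
  have hTN : T.card ≤ N := by
    simpa using Finset.card_le_univ T
  have hpos : 0 < finrank K ↥(U ⊓ W) := by omega
  have hne : U ⊓ W ≠ ⊥ := by
    intro h0
    rw [h0, finrank_bot] at hpos
    exact lt_irrefl 0 hpos
  obtain ⟨w, hw, hw0⟩ := Submodule.exists_mem_ne_zero_of_ne_bot hne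
  have hwU : w ∈ U := hw.1
  have hwW : w ∈ W := hw.2
  -- bounded above ranges
  have bdd : ∀ g : Fin N → ℝ, BddAbove (Set.range g) := fun g =>
    Set.Finite.bddAbove (Set.finite_range g)
  -- n' w ≤ t * n w  from  w ∈ U
  have hsupp_e : ↑(e.repr w).support ⊆ ↑S := e.mem_span_image.1 hwU
  have hrepr_e : ∑ i, e.repr w i • e i = w := e.sum_repr w
  have hnw : n w = ⨆ i, ‖e.repr w i‖ * n (e i) := by
    conv_lhs => rw [← hrepr_e]
    exact he _
  have hn'w : n' w = ⨆ i, ‖e.repr w i‖ * n' (e i) := by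
    conv_lhs => rw [← hrepr_e]
    exact he' _
  have hub : n' w ≤ t * n w := by
    rw [hn'w]
    apply ciSup_le
    intro i
    by_cases hiS : i ∈ S
    · have h1 : n' (e i) ≤ t * n (e i) := (Finset.mem_filter.1 hiS).2
      calc ‖e.repr w i‖ * n' (e i) ≤ ‖e.repr w i‖ * (t * n (e i)) :=
            mul_le_mul_of_nonneg_left h1 (norm_nonneg _)
        _ = t * (‖e.repr w i‖ * n (e i)) := by ring
        _ ≤ t * n w := by
            apply mul_le_mul_of_nonneg_left _ ht.le
            rw [hnw]
            exact le_ciSup (f := fun i => ‖e.repr w i‖ * n (e i)) (bdd _) i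
    · have h0 : e.repr w i = 0 := by
        by_contra h1
        exact hiS (hsupp_e (Finsupp.mem_support_iff.2 h1))
      rw [h0]
      simp only [norm_zero, zero_mul]
      exact mul_nonneg ht.le (hn.1 w)
  -- n' w > t * n w  from  w ∈ W, w ≠ 0
  have hsupp_f : ↑(f.repr w).support ⊆ ↑Tᶜ := f.mem_span_image.1 hwW
  have hrepr_f : ∑ j, f.repr w j • f j = w := f.sum_repr w
  have hnwf : n w = ⨆ j, ‖f.repr w j‖ * n (f j) := by
    conv_lhs => rw [← hrepr_f]
    exact hf _
  have hn'wf : n' w = ⨆ j, ‖f.repr w j‖ * n' (f j) := by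
    conv_lhs => rw [← hrepr_f]
    exact hf' _
  obtain ⟨j0, -, hj0⟩ := Finset.exists_max_image Finset.univ
    (fun j => ‖f.repr w j‖ * n (f j)) Finset.univ_nonempty
  have hnwj0 : n w = ‖f.repr w j0‖ * n (f j0) := by
    rw [hnwf]
    exact le_antisymm (ciSup_le (fun j => hj0 j (Finset.mem_univ j)))
      (le_ciSup (f := fun j => ‖f.repr w j‖ * n (f j)) (bdd _) j0)
  have hnwpos : 0 < n w := npos w hw0
  have hbj0 : f.repr w j0 ≠ 0 := by
    intro h0
    rw [hnwj0, h0] at hnwpos; simp at hnwpos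
  have hj0T : j0 ∈ Tᶜ := hsupp_f (Finsupp.mem_support_iff.2 hbj0)
  have hj0gt : t * n (f j0) < n' (f j0) := by
    have := Finset.mem_compl.1 hj0T
    rw [hTdef, Finset.mem_filter] at this
    push_neg at this
    exact this (Finset.mem_univ j0)
  have hlb : t * n w < n' w := by
    calc t * n w = ‖f.repr w j0‖ * (t * n (f j0)) := by rw [hnwj0]; ring
      _ < ‖f.repr w j0‖ * n' (f j0) :=
          mul_lt_mul_of_pos_left hj0gt (norm_pos_iff.2 hbj0)
      _ ≤ n' w := by
          rw [hn'wf]; exact le_ciSup (f := fun j => ‖f.repr w j‖ * n' (f j)) (bdd _) j0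
  exact absurd hub (not_le.2 hlb)

/-- The Bruhat–Tits distance is well defined: the quantity
`∑ i, (log (‖e i‖′ / ‖e i‖))²` is independent of the choice of common orthogonal basis. -/
theorem bruhatTits_dist_well_defined
    (K : Type*) [NontriviallyNormedField K] [CompleteSpace K]
    (hultra : ∀ a b : K, ‖a + b‖ ≤ max ‖a‖ ‖b‖)
    (hdisc : ∃ q : ℝ, 1 < q ∧ ∀ a : K, a ≠ 0 → ∃ m : ℤ, ‖a‖ = q ^ m)
    (V : Type*) [AddCommGroup V] [Module K V]
    (N : ℕ) (hN : 1 ≤ N) (hdim : Module.finrank K V = N)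
    (n n' : V → ℝ) (hn : IsVecNorm K n) (hn' : IsVecNorm K n')
    (e f : Module.Basis (Fin N) K V)
    (he : IsOrthogonalBasis n e) (he' : IsOrthogonalBasis n' e)
    (hf : IsOrthogonalBasis n f) (hf' : IsOrthogonalBasis n' f) :
    ∑ i : Fin N, (Real.log (n' (e i) / n (e i))) ^ 2
      = ∑ i : Fin N, (Real.log (n' (f i) / n (f i))) ^ 2 := by
  classical
  have npos : ∀ v : V, v ≠ 0 → 0 < n v := fun v hv =>
    lt_of_le_of_ne (hn.1 v) (fun h0 => hv ((hn.2.1 v).1 h0.symm))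
  set ms : Multiset ℝ := Finset.univ.val.map (fun i => n' (e i) / n (e i)) with hms
  set mt : Multiset ℝ := Finset.univ.val.map (fun i => n' (f i) / n (f i)) with hmt
  -- counting functions of the two multisets
  have key : ∀ (g : Basis (Fin N) K V) (x : ℝ),
      Multiset.card ((Finset.univ.val.map (fun i => n' (g i) / n (g i))).filter (· ≤ x))
        = (Finset.univ.filter (fun i => n' (g i) ≤ x * n (g i))).card := by
    intro g x
    rw [Multiset.filter_map, Multiset.card_map]
    have : Finset.univ.filter (fun i => n' (g i) ≤ x * n (g i))
        = Finset.univ.filter (fun i => ((· ≤ x) ∘ (fun i => n' (g i) / n (g i))) i) := by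
      apply Finset.filter_congr
      intro i _
      simp only [Function.comp_apply]
      rw [div_le_iff₀ (npos _ (g.ne_zero i)), mul_comm]
    rw [this]
    rfl
  have hcdf : ∀ x : ℝ, Multiset.card (ms.filter (· ≤ x)) = Multiset.card (mt.filter (· ≤ x)) := by
    intro x
    rw [hms, hmt, key e x, key f x]
    exact le_antisymm
      (count_mono hN hdim hn hn' he he' hf hf' x)
      (count_mono hN hdim hn hn' hf hf' he he' x)
  have hcard : Multiset.card ms = N := by
    rw [hms, Multiset.card_map]
    simp
  have hmseq : ms = mt := multiset_eq_of_cdf N ms mt hcard hcdf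
  have hsum : ∀ (g : Basis (Fin N) K V),
      ∑ i : Fin N, (Real.log (n' (g i) / n (g i))) ^ 2
        = ((Finset.univ.val.map (fun i => n' (g i) / n (g i))).map
            (fun r => (Real.log r) ^ 2)).sum := by
    intro g
    rw [Multiset.map_map]
    rfl
  rw [hsum e, hsum f, ← hms, ← hmt, hmseq]
end

section
/- If F and F' are k-opposed finite decreasing filtrations on V, then V is the internal direct sum of the subspaces V^{p,k−p} := F^p ∩ F'^{k−p} over all p ∈ ℤ, and moreover F^p = ⊕_{i ≥ p} V^{i,k−i} and F'^q = ⊕_{j ≥ q} V^{k−j,j} for all p, q ∈ ℤ. -/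
/-- A finite decreasing filtration on a complex vector space `V`. -/
def IsDecFiltration {V : Type*} [AddCommGroup V] [Module ℂ V]
    (F : ℤ → Submodule ℂ V) : Prop :=
  (∀ p : ℤ, F (p + 1) ≤ F p) ∧ (∃ p₀ : ℤ, ∀ p ≤ p₀, F p = ⊤) ∧
    (∃ p₁ : ℤ, ∀ p ≥ p₁, F p = ⊥)

/-- Two finite decreasing filtrations `F, F'` on `V` are `k`-opposed if
`V = F^p ⊕ F'^{k+1−p}` for every `p`. -/
def KOpposed {V : Type*} [AddCommGroup V] [Module ℂ V]
    (F F' : ℤ → Submodule ℂ V) (k : ℤ) : Prop :=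
  ∀ p : ℤ, IsCompl (F p) (F' (k + 1 - p))

/-- If `F` and `F'` are `k`-opposed finite decreasing filtrations on `V`, then `V` is the
internal direct sum of the Hodge pieces `V^{p,k−p} = F^p ∩ F'^{k−p}`, and
`F^p = ⊕_{i ≥ p} V^{i,k−i}`, `F'^q = ⊕_{j ≥ q} V^{k−j,j}`. -/
theorem hodge_decomposition_of_opposed_filtrations
    (V : Type*) [AddCommGroup V] [Module ℂ V] [FiniteDimensional ℂ V]
    (k : ℤ) (F F' : ℤ → Submodule ℂ V)
    (hF : IsDecFiltration F) (hF' : IsDecFiltration F')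
    (hopp : KOpposed F F' k) :
    DirectSum.IsInternal (fun p : ℤ => F p ⊓ F' (k - p)) ∧
    (∀ p : ℤ, F p = ⨆ i : ℤ, ⨆ _ : p ≤ i, (F i ⊓ F' (k - i))) ∧
    (∀ q : ℤ, F' q = ⨆ j : ℤ, ⨆ _ : q ≤ j, (F (k - j) ⊓ F' j)) := by
  obtain ⟨hFmono, ⟨p₀, hp₀⟩, ⟨p₁, hp₁⟩⟩ := hF
  obtain ⟨hF'mono, ⟨q₀, hq₀⟩, ⟨q₁, hq₁⟩⟩ := hF'
  have hFa : Antitone F := antitone_int_of_succ_le hFmono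
  have hF'a : Antitone F' := antitone_int_of_succ_le hF'mono
  set Vp : ℤ → Submodule ℂ V := fun p => F p ⊓ F' (k - p) with hVp
  -- disjointness facts
  have hdis : ∀ p : ℤ, Disjoint (F p) (F' (k + 1 - p)) := fun p => (hopp p).disjoint
  -- step lemma for F
  have hstep : ∀ p : ℤ, F p = F (p + 1) ⊔ Vp p := by
    intro p
    refine le_antisymm ?_ (sup_le (hFmono p) inf_le_left)
    intro v hv
    obtain ⟨a, b, ha, hb, hab⟩ :=
      Submodule.codisjoint_iff_exists_add_eq.mp (hopp (p + 1)).codisjoint v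
    have hb' : b ∈ F' (k - p) := by
      have : k + 1 - (p + 1) = k - p := by ring
      rwa [this] at hb
    have hbF : b ∈ F p := by
      have : b = v - a := by rw [← hab]; abel
      rw [this]; exact sub_mem hv (hFmono p ha)
    rw [← hab]
    exact Submodule.add_mem_sup ha (Submodule.mem_inf.mpr ⟨hbF, hb'⟩)
  -- step lemma for F'
  have hstep' : ∀ q : ℤ, F' q = F' (q + 1) ⊔ (F (k - q) ⊓ F' q) := by
    intro q
    refine le_antisymm ?_ (sup_le (hF'mono q) inf_le_right)
    intro v hv
    obtain ⟨a, b, ha, hb, hab⟩ :=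
      Submodule.codisjoint_iff_exists_add_eq.mp (hopp (k - q)).codisjoint v
    have hb' : b ∈ F' (q + 1) := by
      have : k + 1 - (k - q) = q + 1 := by ring
      rwa [this] at hb
    have haF : a ∈ F' q := by
      have : a = v - b := by rw [← hab]; abel
      rw [this]; exact sub_mem hv (hF'mono q hb')
    rw [← hab]
    exact Submodule.mem_sup.mpr ⟨b, hb', a, Submodule.mem_inf.mpr ⟨ha, haF⟩, add_comm b a⟩
  -- sup splitting
  have hsupsplit : ∀ (G : ℤ → Submodule ℂ V) (p : ℤ),
      (⨆ i : ℤ, ⨆ _ : p ≤ i, G i) = G p ⊔ ⨆ i : ℤ, ⨆ _ : p + 1 ≤ i, G i := by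
    intro G p
    refine le_antisymm ?_ ?_
    · refine iSup₂_le fun i hi => ?_
      rcases eq_or_lt_of_le hi with h | h
      · exact h ▸ le_sup_left
      · exact le_trans (le_iSup₂ (f := fun i (_ : p + 1 ≤ i) => G i) i h) le_sup_right
    · refine sup_le (le_iSup₂ (f := fun i (_ : p ≤ i) => G i) p le_rfl) ?_
      exact iSup₂_le fun i hi => le_iSup₂ (f := fun i (_ : p ≤ i) => G i) i (by omega)
  -- F p = ⊔_{i ≥ p} Vp i
  have hFdesc : ∀ p : ℤ, F p = ⨆ i : ℤ, ⨆ _ : p ≤ i, Vp i := by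
    have hbase : ∀ p : ℤ, p₁ ≤ p → F p = ⨆ i : ℤ, ⨆ _ : p ≤ i, Vp i := by
      intro p hp
      rw [hp₁ p hp]
      symm
      refine le_antisymm (iSup₂_le fun i hi => ?_) bot_le
      exact le_trans inf_le_left (le_of_eq (hp₁ i (by omega)))
    have key : ∀ n : ℕ, ∀ p : ℤ, p₁ - n ≤ p → F p = ⨆ i : ℤ, ⨆ _ : p ≤ i, Vp i := by
      intro n
      induction n with
      | zero => intro p hp; exact hbase p (by omega)
      | succ m ih =>
        intro p hp
        by_cases h : p₁ - m ≤ p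
        · exact ih p h
        · have hpeq : F (p + 1) = ⨆ i : ℤ, ⨆ _ : p + 1 ≤ i, Vp i := ih (p + 1) (by omega)
          rw [hstep p, hpeq, hsupsplit Vp p, sup_comm]
    intro p
    rcases le_or_gt p₁ p with h | h
    · exact hbase p h
    · exact key (p₁ - p).toNat p (by omega)
    -- F' q = ⊔_{j ≥ q} F(k-j) ⊓ F' j
  have hF'desc : ∀ q : ℤ, F' q = ⨆ j : ℤ, ⨆ _ : q ≤ j, (F (k - j) ⊓ F' j) := by
    have hbase : ∀ q : ℤ, q₁ ≤ q → F' q = ⨆ j : ℤ, ⨆ _ : q ≤ j, (F (k - j) ⊓ F' j) := by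
      intro q hq
      rw [hq₁ q hq]
      symm
      refine le_antisymm (iSup₂_le fun j hj => ?_) bot_le
      exact le_trans inf_le_right (le_of_eq (hq₁ j (by omega)))
    have key : ∀ n : ℕ, ∀ q : ℤ, q₁ - n ≤ q →
        F' q = ⨆ j : ℤ, ⨆ _ : q ≤ j, (F (k - j) ⊓ F' j) := by
      intro n
      induction n with
      | zero => intro q hq; exact hbase q (by omega)
      | succ m ih =>
        intro q hq
        by_cases h : q₁ - m ≤ q
        · exact ih q h
        · have hpeq := ih (q + 1) (by omega)
          rw [hstep' q, hpeq, hsupsplit (fun j => F (k - j) ⊓ F' j) q, sup_comm]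
    intro q
    rcases le_or_gt q₁ q with h | h
    · exact hbase q h
    · exact key (q₁ - q).toNat q (by omega)
  -- independence
  have hindep : iSupIndep Vp := by
    intro p
    have hle : (⨆ (q : ℤ) (_ : q ≠ p), Vp q) ≤ F (p + 1) ⊔ F' (k + 1 - p) := by
      refine iSup₂_le fun q hq => ?_
      rcases lt_or_gt_of_ne hq with h | h
      · exact le_trans (le_trans inf_le_right (hF'a (by omega : k + 1 - p ≤ k - q)))
          le_sup_right
      · exact le_trans (le_trans inf_le_left (hFa (by omega : p + 1 ≤ q))) le_sup_left
    refine Disjoint.mono_right hle ?_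
    rw [Submodule.disjoint_def]
    intro x hx hx'
    obtain ⟨hxF, hxF'⟩ := Submodule.mem_inf.mp hx
    obtain ⟨a, ha, b, hb, hab⟩ := Submodule.mem_sup.mp hx'
    have hbF : b ∈ F p := by
      have : b = x - a := by rw [← hab]; abel
      rw [this]; exact sub_mem hxF (hFmono p ha)
    have hb0 : b = 0 := by
      have := hdis p
      rw [Submodule.disjoint_def] at this
      exact this b hbF hb
    have hxa : x = a := by rw [← hab, hb0, add_zero]
    have hd := hdis (p + 1)
    rw [Submodule.disjoint_def] at hd
    have : (k : ℤ) + 1 - (p + 1) = k - p := by ring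
    exact hd x (hxa ▸ ha) (this ▸ hxF')
  have htop : iSup Vp = ⊤ := by
    have h1 : F (min p₀ (k - q₀)) = ⊤ := hp₀ _ (min_le_left _ _)
    rw [← top_le_iff, ← h1, hFdesc]
    exact iSup₂_le fun i _ => le_iSup Vp i
  refine ⟨?_, hFdesc, hF'desc⟩
  exact (DirectSum.isInternal_submodule_iff_iSupIndep_and_iSup_eq_top Vp).mpr ⟨hindep, htop⟩
end

section
/- The kernel of a morphism of complex mixed Hodge structures, equipped with the induced filtrations, is again a complex mixed Hodge structure: if f : (V, W, F, F') → (V', W', G, G') is a morphism of ℂ-MHS and U := ker(f) ⊆ V, then (U, (W_k ∩ U)_k, (F^p ∩ U)_p, (F'^p ∩ U)_p) is a ℂ-MHS, i.e. for every k ∈ ℤ the filtrations induced by F ∩ U and F' ∩ U on (W_k ∩ U)/(W_{k−1} ∩ U) are k-opposed. -/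
/-- A finite increasing filtration on a complex vector space `V`. -/
def IsIncFiltration {V : Type*} [AddCommGroup V] [Module ℂ V]
    (W : ℤ → Submodule ℂ V) : Prop :=
  (∀ k : ℤ, W (k - 1) ≤ W k) ∧ (∃ k₀ : ℤ, ∀ k ≤ k₀, W k = ⊥) ∧
    (∃ k₁ : ℤ, ∀ k ≥ k₁, W k = ⊤)

/-- The filtrations induced by `F` and `F'` on `gr^W_k V = W k / W (k−1)` are `k`-opposed:
for every `p`, the images of `F^p ∩ W_k` and `F'^{k+1−p} ∩ W_k` in `V / W_{k−1}` give a
direct sum decomposition of the image of `W_k`. -/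
def GrKOpposed {V : Type*} [AddCommGroup V] [Module ℂ V]
    (W F F' : ℤ → Submodule ℂ V) (k : ℤ) : Prop :=
  ∀ p : ℤ,
    ((F p ⊓ W k).map (W (k - 1)).mkQ ⊔ (F' (k + 1 - p) ⊓ W k).map (W (k - 1)).mkQ
        = (W k).map (W (k - 1)).mkQ) ∧
    ((F p ⊓ W k).map (W (k - 1)).mkQ ⊓ (F' (k + 1 - p) ⊓ W k).map (W (k - 1)).mkQ = ⊥)

/-- A complex mixed Hodge structure on `V`: a finite increasing weight filtration `W` and
finite decreasing filtrations `F`, `F'` inducing `k`-opposed filtrations on each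
`gr^W_k V`. -/
def IsCMHS {V : Type*} [AddCommGroup V] [Module ℂ V]
    (W F F' : ℤ → Submodule ℂ V) : Prop :=
  IsIncFiltration W ∧ IsDecFiltration F ∧ IsDecFiltration F' ∧
    ∀ k : ℤ, GrKOpposed W F F' k

namespace CMHSKer

variable {V : Type*} [AddCommGroup V] [Module ℂ V]
variable {W F F' : ℤ → Submodule ℂ V}

lemma inc_mono (hW : ∀ k : ℤ, W (k - 1) ≤ W k) {j k : ℤ} (hjk : j ≤ k) : W j ≤ W k := by
  refine Int.le_induction (motive := fun n _ => W j ≤ W n) le_rfl ?_ k hjk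
  intro m _ ih
  refine ih.trans ?_
  simpa using hW (m + 1)

lemma dec_anti (hF : ∀ p : ℤ, F (p + 1) ≤ F p) {p q : ℤ} (hpq : p ≤ q) : F q ≤ F p := by
  refine Int.le_induction (motive := fun n _ => F n ≤ F p) le_rfl ?_ q hpq
  intro m _ ih
  exact (hF m).trans ih

lemma grk_sup_elt {k : ℤ} (h : GrKOpposed W F F' k) (p : ℤ) {v : V} (hv : v ∈ W k) :
    ∃ a ∈ F p ⊓ W k, ∃ b ∈ F' (k + 1 - p) ⊓ W k, v - a - b ∈ W (k - 1) := by
  have hme : (W (k - 1)).mkQ v ∈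
      (F p ⊓ W k).map (W (k - 1)).mkQ ⊔ (F' (k + 1 - p) ⊓ W k).map (W (k - 1)).mkQ := by
    rw [(h p).1]; exact Submodule.mem_map_of_mem hv
  rcases Submodule.mem_sup.1 hme with ⟨y, hy, z, hz, hyz⟩
  rcases Submodule.mem_map.1 hy with ⟨a, ha, rfl⟩
  rcases Submodule.mem_map.1 hz with ⟨b, hb, rfl⟩
  refine ⟨a, ha, b, hb, ?_⟩
  have : (W (k - 1)).mkQ (v - a - b) = 0 := by
    rw [map_sub, map_sub, ← hyz]; abel
  rwa [← LinearMap.mem_ker, Submodule.ker_mkQ] at this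

lemma grk_inf_elt {k : ℤ} (h : GrKOpposed W F F' k) (p : ℤ) {a b : V}
    (ha : a ∈ F p ⊓ W k) (hb : b ∈ F' (k + 1 - p) ⊓ W k) (hab : a - b ∈ W (k - 1)) :
    a ∈ W (k - 1) := by
  have h1 : (W (k - 1)).mkQ a ∈ (F p ⊓ W k).map (W (k - 1)).mkQ :=
    Submodule.mem_map_of_mem ha
  have heq : (W (k - 1)).mkQ a = (W (k - 1)).mkQ b := by
    have : (W (k - 1)).mkQ (a - b) = 0 := by
      rwa [← LinearMap.mem_ker, Submodule.ker_mkQ]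
    rw [map_sub, sub_eq_zero] at this; exact this
  have h2 : (W (k - 1)).mkQ a ∈ (F' (k + 1 - p) ⊓ W k).map (W (k - 1)).mkQ := by
    rw [heq]; exact Submodule.mem_map_of_mem hb
  have : (W (k - 1)).mkQ a ∈ (⊥ : Submodule ℂ (V ⧸ W (k - 1))) := by
    rw [← (h p).2]; exact ⟨h1, h2⟩
  rw [Submodule.mem_bot] at this
  rwa [← LinearMap.mem_ker, Submodule.ker_mkQ] at this

lemma GrKOpposed.symm {k : ℤ} (h : GrKOpposed W F F' k) : GrKOpposed W F' F k := by
  intro p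
  have h2 := h (k + 1 - p)
  have e : k + 1 - (k + 1 - p) = p := by ring
  rw [e] at h2
  exact ⟨by rw [sup_comm]; exact h2.1, by rw [inf_comm]; exact h2.2⟩

lemma isCMHS_swap (h : IsCMHS W F F') : IsCMHS W F' F :=
  ⟨h.1, h.2.2.1, h.2.1, fun k => GrKOpposed.symm (h.2.2.2 k)⟩



/-- The tail part of the Deligne splitting: `F'^q + Σ_{j≥0} (F'^{q-j-1} ∩ W_{k-j-2})`. -/
def dT (W F' : ℤ → Submodule ℂ V) (k q : ℤ) : Submodule ℂ V :=
  F' q ⊔ ⨆ j : ℕ, (F' (q - (j : ℤ) - 1) ⊓ W (k - (j : ℤ) - 2))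

/-- The Deligne splitting `I^{p,q}`. -/
def dI (W F F' : ℤ → Submodule ℂ V) (p q : ℤ) : Submodule ℂ V :=
  F p ⊓ W (p + q) ⊓ dT W F' (p + q) q

variable {hWm : ∀ k : ℤ, W (k - 1) ≤ W k}

lemma dI_le_F {p q : ℤ} : dI W F F' p q ≤ F p := inf_le_left.trans inf_le_left

lemma dI_le_W {p q : ℤ} : dI W F F' p q ≤ W (p + q) := inf_le_left.trans inf_le_right

lemma dT_tail_le_W (hW : ∀ k : ℤ, W (k - 1) ≤ W k) {k q : ℤ} :
    (⨆ j : ℕ, (F' (q - (j : ℤ) - 1) ⊓ W (k - (j : ℤ) - 2))) ≤ W (k - 2) := by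
  refine iSup_le fun j => inf_le_right.trans (inc_mono hW (by omega))

lemma dT_le (hW : ∀ k : ℤ, W (k - 1) ≤ W k) (hF' : ∀ p : ℤ, F' (p + 1) ≤ F' p)
    {k q : ℤ} (m : ℕ) :
    dT W F' k q ≤ F' (q - m) ⊔ W (k - m - 2) := by
  refine sup_le ?_ (iSup_le fun j => ?_)
  · exact le_sup_of_le_left (dec_anti hF' (by omega))
  · by_cases hj : (j : ℤ) < m
    · exact le_sup_of_le_left (inf_le_left.trans (dec_anti hF' (by omega)))
    · exact le_sup_of_le_right (inf_le_right.trans (inc_mono hW (by omega)))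

/-- Splitting off the first `m` tail terms: an element of `I^{p,q}` is of the form
`c + w` with `c ∈ F'^{q-m} ∩ W_{p+q}` and `w ∈ W_{p+q-m-2}`. -/
lemma dI_split (hW : ∀ k : ℤ, W (k - 1) ≤ W k) (hF' : ∀ p : ℤ, F' (p + 1) ≤ F' p)
    {p q : ℤ} (m : ℕ) {x : V} (hx : x ∈ dI W F F' p q) :
    ∃ c ∈ F' (q - m) ⊓ W (p + q), x - c ∈ W (p + q - m - 2) := by
  have hxW : x ∈ W (p + q) := dI_le_W hx
  have h1 : x ∈ F' (q - m) ⊔ W (p + q - m - 2) := (dT_le hW hF' m) hx.2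
  rcases Submodule.mem_sup.1 h1 with ⟨c, hc, w, hw, hcw⟩
  refine ⟨c, ⟨hc, ?_⟩, ?_⟩
  · have : c = x - w := by rw [← hcw]; abel
    rw [this]
    exact Submodule.sub_mem _ hxW (inc_mono hW (by omega) hw)
  · have : x - c = w := by rw [← hcw]; abel
    rw [this]; exact hw

/-- `I^{p,q} ∩ W_{p+q-1} = 0`. -/
lemma dI_inf_W (h : IsCMHS W F F') {p q : ℤ} {x : V}
    (hx : x ∈ dI W F F' p q) (hx' : x ∈ W (p + q - 1)) : x = 0 := by
  obtain ⟨hWm, ⟨k₀, hk₀⟩, -⟩ := h.1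
  have hF'm := h.2.2.1.1
  have key : ∀ m : ℕ, x ∈ W (p + q - 1 - m) := by
    intro m
    induction m with
    | zero => simpa using hx'
    | succ m ih =>
      obtain ⟨c, ⟨hc1, hc2⟩, hw⟩ := dI_split hWm hF'm m hx
      set k' : ℤ := p + q - 1 - m with hk'
      have hcW : c ∈ W k' := by
        have : c = x - (x - c) := by abel
        rw [this]
        exact Submodule.sub_mem _ ih (inc_mono hWm (by omega) hw)
      have hxa : x ∈ F p ⊓ W k' := ⟨hx.1.1, ih⟩
      have hcb : c ∈ F' (k' + 1 - p) ⊓ W k' := by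
        have : k' + 1 - p = q - m := by omega
        rw [this]; exact ⟨hc1, hcW⟩
      have hab : x - c ∈ W (k' - 1) := by
        have : (k' : ℤ) - 1 = p + q - m - 2 := by omega
        rw [this]; exact hw
      have := grk_inf_elt (h.2.2.2 k') p hxa hcb hab
      have he : k' - 1 = p + q - 1 - (m + 1 : ℕ) := by push_cast; omega
      rwa [he] at this
  have hm := key (p + q - 1 - k₀).toNat
  have : p + q - 1 - ((p + q - 1 - k₀).toNat : ℤ) ≤ k₀ := by omega
  have : W (p + q - 1 - ((p + q - 1 - k₀).toNat : ℤ)) = ⊥ := hk₀ _ this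
  rw [this, Submodule.mem_bot] at hm
  exact hm

/-- Lower-weight pieces `I^{p',q'}` with `p' < p`, `p'+q' ≤ p+q-1` lie in the tail
module `dT W F' k q` for `k = p + q`. -/
lemma dI_le_dT (hW : ∀ k : ℤ, W (k - 1) ≤ W k) (hF' : ∀ p : ℤ, F' (p + 1) ≤ F' p)
    {p q p' q' : ℤ} (hp' : p' < p) (hw : p' + q' ≤ p + q - 1) :
    dI W F F' p' q' ≤ dT W F' (p + q) q := by
  set k : ℤ := p + q with hk
  set i : ℤ := k - (p' + q') with hi
  have hi1 : 1 ≤ i := by omega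
  have hq' : q - i + 1 ≤ q' := by omega
  -- the tail of dI p' q' goes into the tail of dT
  have htail : (⨆ j : ℕ, (F' (q' - (j : ℤ) - 1) ⊓ W (p' + q' - (j : ℤ) - 2)))
      ≤ dT W F' k q := by
    refine iSup_le fun j => ?_
    have hj1 : ((i - 1 + j).toNat : ℤ) = i - 1 + j := by omega
    refine le_trans ?_ (le_sup_of_le_right (le_iSup _ (i - 1 + (j : ℤ)).toNat))
    rw [hj1]
    exact inf_le_inf (dec_anti hF' (by omega)) (inc_mono hW (by omega))
  intro x hx
  obtain ⟨⟨-, hxW⟩, hx3⟩ := hx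
  rcases Submodule.mem_sup.1 hx3 with ⟨c, hc, y, hy, hcy⟩
  have hyW : y ∈ W (p' + q' - 2) := dT_tail_le_W hW hy
  have hcW : c ∈ W (k - i) := by
    have : c = x - y := by rw [← hcy]; abel
    rw [this]
    refine Submodule.sub_mem _ ?_ (inc_mono hW (by omega) hyW)
    exact inc_mono hW (by omega) hxW
  have hcT : c ∈ dT W F' k q := by
    by_cases hi2 : i = 1
    · exact Submodule.mem_sup_left (dec_anti hF' (by omega) hc)
    · refine Submodule.mem_sup_right (Submodule.mem_iSup_of_mem (i - 2).toNat ?_)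
      have hj2 : ((i - 2).toNat : ℤ) = i - 2 := by omega
      rw [hj2]
      constructor
      · exact dec_anti hF' (by omega) hc
      · have : k - (i - 2) - 2 = k - i := by ring
        rw [this]; exact hcW
  have : x = c + y := hcy.symm
  rw [this]
  exact Submodule.add_mem _ hcT (htail hy)

/-- Functoriality of the Deligne splitting. -/
lemma dI_map {V' : Type*} [AddCommGroup V'] [Module ℂ V']
    {W' G G' : ℤ → Submodule ℂ V'} (f : V →ₗ[ℂ] V')
    (hfW : ∀ k : ℤ, (W k).map f ≤ W' k)
    (hfF : ∀ p : ℤ, (F p).map f ≤ G p)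
    (hfF' : ∀ p : ℤ, (F' p).map f ≤ G' p)
    {p q : ℤ} {x : V} (hx : x ∈ dI W F F' p q) : f x ∈ dI W' G G' p q := by
  refine ⟨⟨hfF p ⟨x, hx.1.1, rfl⟩, hfW _ ⟨x, hx.1.2, rfl⟩⟩, ?_⟩
  have : (dT W F' (p + q) q).map f ≤ dT W' G' (p + q) q := by
    rw [dT, Submodule.map_sup, Submodule.map_iSup]
    refine sup_le (le_sup_of_le_left (Submodule.map_le_iff_le_comap.2 ?_))
      (le_sup_of_le_right (iSup_le fun j => le_trans ?_ (le_iSup _ j)))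
    · intro y hy; exact hfF' q ⟨y, hy, rfl⟩
    · refine le_trans (Submodule.map_inf_le f) (inf_le_inf ?_ ?_)
      · intro y ⟨z, hz, hzy⟩; exact hzy ▸ hfF' _ ⟨z, hz, rfl⟩
      · intro y ⟨z, hz, hzy⟩; exact hzy ▸ hfW _ ⟨z, hz, rfl⟩
  exact this ⟨x, hx.2, rfl⟩

/-- The sum of the pieces `I^{p',q'}` with `p ≤ p'`, `p' + q' ≤ k`. -/
def dSum (W F F' : ℤ → Submodule ℂ V) (p k : ℤ) : Submodule ℂ V :=
  ⨆ i : ℤ × ℤ, ⨆ _ : p ≤ i.1 ∧ i.1 + i.2 ≤ k, dI W F F' i.1 i.2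

lemma dI_le_dSum {p k p' q' : ℤ} (h1 : p ≤ p') (h2 : p' + q' ≤ k) :
    dI W F F' p' q' ≤ dSum W F F' p k :=
  le_iSup_of_le (p', q') (le_iSup_of_le ⟨h1, h2⟩ le_rfl)

lemma dSum_decompose {p k : ℤ} {x : V} (hx : x ∈ dSum W F F' p k) :
    ∃ (s : Finset (ℤ × ℤ)) (c : ℤ × ℤ → V),
      (∀ i ∈ s, c i ∈ dI W F F' i.1 i.2 ∧ p ≤ i.1 ∧ i.1 + i.2 ≤ k) ∧
      ∑ i ∈ s, c i = x := by
  classical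
  rw [dSum, Submodule.mem_iSup_iff_exists_finsupp] at hx
  obtain ⟨c, hc, hsum⟩ := hx
  refine ⟨c.support.filter (fun i => p ≤ i.1 ∧ i.1 + i.2 ≤ k), c, ?_, ?_⟩
  · intro i hi
    rw [Finset.mem_filter] at hi
    have := hc i
    rw [iSup_pos hi.2] at this
    exact ⟨this, hi.2⟩
  · rw [← hsum, Finsupp.sum]
    refine Finset.sum_filter_of_ne ?_
    intro i hi hne
    by_contra hni
    have := hc i
    rw [iSup_neg hni] at this
    exact hne ((Submodule.mem_bot ℂ).1 this)

lemma dSum_mono_p {p p' k : ℤ} (h : p ≤ p') : dSum W F F' p' k ≤ dSum W F F' p k :=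
  iSup_le fun i => iSup_le fun hi => dI_le_dSum (le_trans h hi.1) hi.2

/-- Existence part of the Deligne splitting: `F^p ∩ W_k` is the sum of the pieces
`I^{p',q'}` with `p ≤ p'` and `p' + q' ≤ k`. -/
theorem dExists (h : IsCMHS W F F') (k p : ℤ) : F p ⊓ W k ≤ dSum W F F' p k := by
  classical
  obtain ⟨hWm, ⟨k₀, hk₀⟩, -⟩ := h.1
  obtain ⟨hFm, ⟨p₀, hp₀⟩, ⟨p₁, hp₁⟩⟩ := h.2.1
  have hF'm := h.2.2.1.1
  have main : ∀ k : ℤ, ∀ p : ℤ, F p ⊓ W k ≤ dSum W F F' p k := by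
    intro k
    by_cases hk : k ≤ k₀
    · intro p; rw [hk₀ k hk, inf_bot_eq]; exact bot_le
    · push_neg at hk
      refine Int.le_induction (motive := fun n _ => ∀ p : ℤ, F p ⊓ W n ≤ dSum W F F' p n)
        ?_ ?_ k hk.le
      · intro p; rw [hk₀ k₀ le_rfl, inf_bot_eq]; exact bot_le
      · intro K _ ihK p
        by_cases hp : p₁ ≤ p
        · rw [hp₁ p hp, bot_inf_eq]; exact bot_le
        · push_neg at hp
          refine Int.le_induction_down
            (motive := fun t _ => F t ⊓ W (K + 1) ≤ dSum W F F' t (K + 1)) ?_ ?_ p hp.le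
          · show F p₁ ⊓ W (K + 1) ≤ dSum W F F' p₁ (K + 1)
            rw [hp₁ p₁ le_rfl, bot_inf_eq]; exact bot_le
          · intro r _ ihr x hx
            obtain ⟨a, ha, b, hb, hw⟩ := grk_sup_elt (h.2.2.2 (K + 1)) r hx.2
            have hb' : b ∈ F' (K + 2 - r) ⊓ W (K + 1) := by
              have e : K + 1 + 1 - r = K + 2 - r := by ring
              rwa [e] at hb
            have hwK : x - a - b ∈ W K := by
              have e : (K : ℤ) + 1 - 1 = K := by ring
              rwa [e] at hw
            have hwd : x - a - b ∈ dSum W F F' (min p₀ (r - 1)) K := by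
              refine ihK (min p₀ (r - 1)) ⟨?_, hwK⟩
              rw [hp₀ _ (min_le_left _ _)]; trivial
            obtain ⟨s, c, hc, hsum⟩ := dSum_decompose hwd
            have hsplit :
                ∑ i ∈ s.filter (fun i => r - 1 ≤ i.1), c i
                  + ∑ i ∈ s.filter (fun i => ¬ r - 1 ≤ i.1), c i = x - a - b := by
              rw [Finset.sum_filter_add_sum_filter_not]; exact hsum
            have hxeq : x = a + (b + ∑ i ∈ s.filter (fun i => ¬ r - 1 ≤ i.1), c i)
                + ∑ i ∈ s.filter (fun i => r - 1 ≤ i.1), c i := by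
              calc x = a + b + (∑ i ∈ s.filter (fun i => r - 1 ≤ i.1), c i
                  + ∑ i ∈ s.filter (fun i => ¬ r - 1 ≤ i.1), c i) := by
                    rw [hsplit]; abel
                _ = _ := by abel
            have hhi : ∑ i ∈ s.filter (fun i => r - 1 ≤ i.1), c i
                ∈ dSum W F F' (r - 1) (K + 1) := by
              refine Submodule.sum_mem _ fun i hi => ?_
              rw [Finset.mem_filter] at hi
              have h2 := (hc i hi.1).2.2
              exact dI_le_dSum hi.2 (by omega) (hc i hi.1).1
            have huI : (b + ∑ i ∈ s.filter (fun i => ¬ r - 1 ≤ i.1), c i)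
                ∈ dI W F F' (r - 1) (K + 2 - r) := by
              have e1 : r - 1 + (K + 2 - r) = K + 1 := by ring
              rw [dI, e1]
              have hueq : b + ∑ i ∈ s.filter (fun i => ¬ r - 1 ≤ i.1), c i
                  = x - a - ∑ i ∈ s.filter (fun i => r - 1 ≤ i.1), c i := by
                rw [hxeq]; abel
              refine ⟨⟨?_, ?_⟩, ?_⟩
              · rw [hueq]
                refine Submodule.sub_mem _ (Submodule.sub_mem _ hx.1
                  (dec_anti hFm (by omega) ha.1)) ?_
                refine Submodule.sum_mem _ fun i hi => ?_
                rw [Finset.mem_filter] at hi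
                exact dec_anti hFm hi.2 ((hc i hi.1).1.1.1)
              · refine Submodule.add_mem _ hb'.2 ?_
                refine Submodule.sum_mem _ fun i hi => ?_
                rw [Finset.mem_filter] at hi
                have h2 := (hc i hi.1).2.2
                exact inc_mono hWm (by omega) (dI_le_W (hc i hi.1).1)
              · refine Submodule.add_mem _ (Submodule.mem_sup_left hb'.1) ?_
                refine Submodule.sum_mem _ fun i hi => ?_
                rw [Finset.mem_filter] at hi
                have h2 := (hc i hi.1).2.2
                have := dI_le_dT (F := F) hWm hF'm
                  (p := r - 1) (q := K + 2 - r) (p' := i.1) (q' := i.2)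
                  (by omega) (by omega) ((hc i hi.1).1)
                rwa [e1] at this
            rw [hxeq]
            refine Submodule.add_mem _ (Submodule.add_mem _ ?_ ?_) hhi
            · exact dSum_mono_p (by omega) (ihr ha)
            · exact dI_le_dSum le_rfl (by omega) huI
  exact main k p

/-- Independence of weight-`k` pieces: if a sum of elements of the `I^{p,k-p}` lies in
`W_{k-1}`, each of them is zero. -/
lemma dTop (h : IsCMHS W F F') {k : ℤ} :
    ∀ (n : ℕ) (s : Finset ℤ), s.card ≤ n → ∀ c : ℤ → V,
      (∀ p ∈ s, c p ∈ dI W F F' p (k - p)) →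
      (∑ p ∈ s, c p) ∈ W (k - 1) → ∀ p ∈ s, c p = 0 := by
  classical
  intro n
  induction n with
  | zero =>
    intro s hs c _ _ p hp
    rw [Finset.card_eq_zero.1 (Nat.le_zero.1 hs)] at hp
    simp at hp
  | succ n ih =>
    intro s hs c hc hsum
    rcases Finset.eq_empty_or_nonempty s with rfl | hne
    · intro p hp; simp at hp
    · have hp₀s : s.min' hne ∈ s := s.min'_mem hne
      set p₀ := s.min' hne with hp₀
      have herase : c p₀ + ∑ p ∈ s.erase p₀, c p = ∑ p ∈ s, c p :=
        Finset.add_sum_erase s c hp₀s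
      have haF : ∑ p ∈ s.erase p₀, c p ∈ F (p₀ + 1) ⊓ W k := by
        constructor
        · refine Submodule.sum_mem _ fun p hp => ?_
          have hps := Finset.mem_of_mem_erase hp
          have h1 := s.min'_le p hps
          have h2 := Finset.ne_of_mem_erase hp
          exact dec_anti h.2.1.1 (by omega) ((hc p hps).1.1)
        · refine Submodule.sum_mem _ fun p hp => ?_
          have hps := Finset.mem_of_mem_erase hp
          have h1 := dI_le_W ((hc p hps))
          have e : p + (k - p) = k := by ring
          rwa [e] at h1
      obtain ⟨x, hx, hw⟩ := dI_split h.1.1 h.2.2.1.1 0 (hc p₀ hp₀s)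
      have hx' : x ∈ F' (k - p₀) ⊓ W k := by
        have e1 : k - p₀ - ((0 : ℕ) : ℤ) = k - p₀ := by push_cast; ring
        have e2 : p₀ + (k - p₀) = k := by ring
        rwa [e1, e2] at hx
      have hw' : c p₀ - x ∈ W (k - 2) := by
        have e : p₀ + (k - p₀) - ((0 : ℕ) : ℤ) - 2 = k - 2 := by push_cast; ring
        rwa [e] at hw
      have haW : ∑ p ∈ s.erase p₀, c p ∈ W (k - 1) := by
        have hab : (∑ p ∈ s.erase p₀, c p) - (-x) ∈ W (k - 1) := by
          have e : (∑ p ∈ s.erase p₀, c p) - (-x)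
              = (∑ p ∈ s, c p) - (c p₀ - x) := by rw [← herase]; abel
          rw [e]
          exact Submodule.sub_mem _ hsum (inc_mono h.1.1 (by omega) hw')
        have hbx : -x ∈ F' (k + 1 - (p₀ + 1)) ⊓ W k := by
          have e : k + 1 - (p₀ + 1) = k - p₀ := by ring
          rw [e]
          exact ⟨Submodule.neg_mem _ hx'.1, Submodule.neg_mem _ hx'.2⟩
        exact grk_inf_elt (h.2.2.2 k) (p₀ + 1) haF hbx hab
      have hcp₀ : c p₀ = 0 := by
        refine dI_inf_W h (hc p₀ hp₀s) ?_
        have e : p₀ + (k - p₀) - 1 = k - 1 := by ring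
        rw [e]
        have : c p₀ = (∑ p ∈ s, c p) - ∑ p ∈ s.erase p₀, c p := by
          rw [← herase]; abel
        rw [this]
        exact Submodule.sub_mem _ hsum haW
      have hrec := ih (s.erase p₀) (by
          have := Finset.card_erase_of_mem hp₀s
          have := Finset.card_pos.2 hne
          omega) c
        (fun p hp => hc p (Finset.mem_of_mem_erase hp)) haW
      intro p hp
      by_cases hpp : p = p₀
      · rw [hpp]; exact hcp₀
      · exact hrec p (Finset.mem_erase.2 ⟨hpp, hp⟩)

set_option maxHeartbeats 2000000 in
/-- `dTop` for families indexed by pairs. -/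
lemma dTopPairs (h : IsCMHS W F F') {k : ℤ} (s : Finset (ℤ × ℤ)) (c : ℤ × ℤ → V)
    (hc : ∀ i ∈ s, c i ∈ dI W F F' i.1 i.2 ∧ i.1 + i.2 ≤ k)
    (hsum : ∑ i ∈ s, c i ∈ W (k - 1)) : ∀ i ∈ s, i.1 + i.2 = k → c i = 0 := by
  classical
  have hlow : ∑ i ∈ s.filter (fun i => ¬ i.1 + i.2 = k), c i ∈ W (k - 1) := by
    refine Submodule.sum_mem _ fun i hi => ?_
    rw [Finset.mem_filter] at hi
    have h1 := (hc i hi.1).2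
    have h2 := hi.2
    exact inc_mono h.1.1 (by omega) (dI_le_W (hc i hi.1).1)
  have htsum : ∑ i ∈ s.filter (fun i => i.1 + i.2 = k), c i ∈ W (k - 1) := by
    have e : ∑ i ∈ s.filter (fun i => i.1 + i.2 = k), c i
        = (∑ i ∈ s, c i) - ∑ i ∈ s.filter (fun i => ¬ i.1 + i.2 = k), c i := by
      rw [← Finset.sum_filter_add_sum_filter_not s (fun i => i.1 + i.2 = k) c]
      abel
    rw [e]
    exact Submodule.sub_mem _ hsum hlow
  have hinj : ∀ i ∈ s.filter (fun i => i.1 + i.2 = k),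
      ∀ j ∈ s.filter (fun i => i.1 + i.2 = k), i.1 = j.1 → i = j := by
    intro i hi j hj hij
    rw [Finset.mem_filter] at hi hj
    have h2 : i.2 = j.2 := by omega
    exact Prod.ext hij h2
  have hsum' : ∑ p ∈ (s.filter (fun i => i.1 + i.2 = k)).image Prod.fst, c (p, k - p)
      = ∑ i ∈ s.filter (fun i => i.1 + i.2 = k), c i := by
    rw [Finset.sum_image hinj]
    refine Finset.sum_congr rfl fun i hi => ?_
    rw [Finset.mem_filter] at hi
    have : (i.1, k - i.1) = i := by
      have : k - i.1 = i.2 := by omega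
      rw [this]
    rw [this]
  have hmem : ∀ p ∈ (s.filter (fun i => i.1 + i.2 = k)).image Prod.fst,
      c (p, k - p) ∈ dI W F F' p (k - p) := by
    intro p hp
    rcases Finset.mem_image.1 hp with ⟨i, hi, rfl⟩
    rw [Finset.mem_filter] at hi
    have hik : (i.1, k - i.1) = i := by
      have : k - i.1 = i.2 := by omega
      rw [this]
    rw [hik]
    have := (hc i hi.1).1
    have e : i.2 = k - i.1 := by omega
    rwa [e] at this
  have hall := dTop h ((s.filter (fun i => i.1 + i.2 = k)).image Prod.fst).card
    _ le_rfl _ hmem (by rw [hsum']; exact htsum)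
  intro i hi hik
  have hif : i ∈ s.filter (fun i => i.1 + i.2 = k) := Finset.mem_filter.2 ⟨hi, hik⟩
  have hp : i.1 ∈ (s.filter (fun i => i.1 + i.2 = k)).image Prod.fst :=
    Finset.mem_image_of_mem _ hif
  have := hall i.1 hp
  have hik2 : (i.1, k - i.1) = i := by
    have : k - i.1 = i.2 := by omega
    rw [this]
  rwa [hik2] at this

/-- Full uniqueness: a finite family of elements of the pieces `I^{p,q}` summing to
zero is identically zero. -/
lemma dUnique (h : IsCMHS W F F') (s : Finset (ℤ × ℤ)) (c : ℤ × ℤ → V)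
    (hc : ∀ i ∈ s, c i ∈ dI W F F' i.1 i.2)
    (hsum : ∑ i ∈ s, c i = 0) : ∀ i ∈ s, c i = 0 := by
  classical
  obtain ⟨k₀, hk₀⟩ := h.1.2.1
  have main : ∀ (m : ℕ) (s : Finset (ℤ × ℤ)) (c : ℤ × ℤ → V),
      (∀ i ∈ s, c i ∈ dI W F F' i.1 i.2 ∧ i.1 + i.2 ≤ k₀ + (m : ℤ)) →
      ∑ i ∈ s, c i = 0 → ∀ i ∈ s, c i = 0 := by
    intro m
    induction m with
    | zero =>
      intro s c hc hsum i hi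
      have h1 := dI_le_W (hc i hi).1
      have h2 : W (i.1 + i.2) = ⊥ := hk₀ _ (by have := (hc i hi).2; omega)
      rw [h2, Submodule.mem_bot] at h1; exact h1
    | succ m ih =>
      intro s c hc hsum
      have htop : ∀ i ∈ s, i.1 + i.2 = k₀ + (m : ℤ) + 1 → c i = 0 := by
        refine dTopPairs h s c (fun i hi => ⟨(hc i hi).1, ?_⟩) ?_
        · have := (hc i hi).2; push_cast at this; omega
        · rw [hsum]; exact Submodule.zero_mem _
      have hlowsum : ∑ i ∈ s.filter (fun i => ¬ i.1 + i.2 = k₀ + (m : ℤ) + 1), c i = 0 := by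
        have e := Finset.sum_filter_add_sum_filter_not s
          (fun i => i.1 + i.2 = k₀ + (m : ℤ) + 1) c
        have htopsum : ∑ i ∈ s.filter (fun i => i.1 + i.2 = k₀ + (m : ℤ) + 1), c i = 0 := by
          refine Finset.sum_eq_zero fun i hi => ?_
          rw [Finset.mem_filter] at hi
          exact htop i hi.1 hi.2
        rw [htopsum, zero_add] at e
        rw [e, hsum]
      have hrest := ih (s.filter (fun i => ¬ i.1 + i.2 = k₀ + (m : ℤ) + 1)) c
        (fun i hi => by
          rw [Finset.mem_filter] at hi
          refine ⟨(hc i hi.1).1, ?_⟩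
          have h1 := (hc i hi.1).2
          have h2 := hi.2
          push_cast at h1
          omega) hlowsum
      intro i hi
      by_cases hik : i.1 + i.2 = k₀ + (m : ℤ) + 1
      · exact htop i hi hik
      · exact hrest i (Finset.mem_filter.2 ⟨hi, hik⟩)
  rcases Finset.eq_empty_or_nonempty s with rfl | hne
  · intro i hi; simp at hi
  · refine main ((s.sup' hne (fun i => i.1 + i.2) - k₀).toNat) s c (fun i hi => ⟨hc i hi, ?_⟩) hsum
    have h1 := Finset.le_sup' (fun i => i.1 + i.2) hi
    omega

/-- Strictness of morphisms of ℂ-MHS with respect to `(F, W)`. -/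
lemma strict {V' : Type*} [AddCommGroup V'] [Module ℂ V']
    {W' G G' : ℤ → Submodule ℂ V'}
    (hV : IsCMHS W F F') (hV' : IsCMHS W' G G')
    (f : V →ₗ[ℂ] V')
    (hfW : ∀ k : ℤ, (W k).map f ≤ W' k)
    (hfF : ∀ p : ℤ, (F p).map f ≤ G p)
    (hfF' : ∀ p : ℤ, (F' p).map f ≤ G' p)
    {p k : ℤ} {x : V} (hx : x ∈ F p ⊓ W k) (hfx : f x ∈ W' (k - 1)) :
    ∃ y ∈ F p ⊓ W (k - 1), f y = f x := by
  classical
  obtain ⟨s, c, hc, hsum⟩ := dSum_decompose (dExists hV k p hx)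
  have htop := dTopPairs hV' s (fun i => f (c i))
    (fun i hi => ⟨dI_map f hfW hfF hfF' (hc i hi).1, (hc i hi).2.2⟩)
    (by rw [← map_sum, hsum]; exact hfx)
  refine ⟨∑ i ∈ s.filter (fun i => i.1 + i.2 ≤ k - 1), c i, ⟨?_, ?_⟩, ?_⟩
  · refine Submodule.sum_mem _ fun i hi => ?_
    rw [Finset.mem_filter] at hi
    exact dec_anti hV.2.1.1 (hc i hi.1).2.1 (dI_le_F (hc i hi.1).1)
  · refine Submodule.sum_mem _ fun i hi => ?_
    rw [Finset.mem_filter] at hi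
    exact inc_mono hV.1.1 hi.2 (dI_le_W (hc i hi.1).1)
  · have e := Finset.sum_filter_add_sum_filter_not s (fun i => i.1 + i.2 ≤ k - 1)
      (fun i => f (c i))
    have hz : ∑ i ∈ s.filter (fun i => ¬ i.1 + i.2 ≤ k - 1), f (c i) = 0 := by
      refine Finset.sum_eq_zero fun i hi => ?_
      rw [Finset.mem_filter] at hi
      have h1 := (hc i hi.1).2.2
      exact htop i hi.1 (by omega)
    calc f (∑ i ∈ s.filter (fun i => i.1 + i.2 ≤ k - 1), c i)
        = ∑ i ∈ s.filter (fun i => i.1 + i.2 ≤ k - 1), f (c i) := map_sum f c _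
      _ = ∑ i ∈ s, f (c i) := by rw [← e, hz, add_zero]
      _ = f (∑ i ∈ s, c i) := (map_sum f c s).symm
      _ = f x := by rw [hsum]

end CMHSKer

open CMHSKer in
/-- The kernel of a morphism of complex mixed Hodge structures, with the induced
filtrations, is again a complex mixed Hodge structure. -/
theorem cmhs_kernel
    (V : Type*) [AddCommGroup V] [Module ℂ V] [FiniteDimensional ℂ V]
    (V' : Type*) [AddCommGroup V'] [Module ℂ V'] [FiniteDimensional ℂ V']
    (W F F' : ℤ → Submodule ℂ V) (W' G G' : ℤ → Submodule ℂ V')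
    (hV : IsCMHS W F F') (hV' : IsCMHS W' G G')
    (f : V →ₗ[ℂ] V')
    (hfW : ∀ k : ℤ, (W k).map f ≤ W' k)
    (hfF : ∀ p : ℤ, (F p).map f ≤ G p)
    (hfF' : ∀ p : ℤ, (F' p).map f ≤ G' p) :
    IsCMHS (fun k : ℤ => (W k).comap (LinearMap.ker f).subtype)
      (fun p : ℤ => (F p).comap (LinearMap.ker f).subtype)
      (fun p : ℤ => (F' p).comap (LinearMap.ker f).subtype) := by
  classical
  set K := LinearMap.ker f with hK
  set ι := K.subtype with hι
  refine ⟨⟨fun k => Submodule.comap_mono (hV.1.1 k), ?_, ?_⟩,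
    ⟨fun p => Submodule.comap_mono (hV.2.1.1 p), ?_, ?_⟩,
    ⟨fun p => Submodule.comap_mono (hV.2.2.1.1 p), ?_, ?_⟩, ?_⟩
  · obtain ⟨k₀, hk₀⟩ := hV.1.2.1
    exact ⟨k₀, fun k hk => by
      show Submodule.comap ι (W k) = ⊥
      rw [hk₀ k hk, Submodule.comap_bot]; exact Submodule.ker_subtype K⟩
  · obtain ⟨k₁, hk₁⟩ := hV.1.2.2
    exact ⟨k₁, fun k hk => by simp only [hk₁ k hk, Submodule.comap_top]⟩
  · obtain ⟨p₀, hp₀⟩ := hV.2.1.2.1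
    exact ⟨p₀, fun p hp => by simp only [hp₀ p hp, Submodule.comap_top]⟩
  · obtain ⟨p₁, hp₁⟩ := hV.2.1.2.2
    exact ⟨p₁, fun p hp => by
      show Submodule.comap ι (F p) = ⊥
      rw [hp₁ p hp, Submodule.comap_bot]; exact Submodule.ker_subtype K⟩
  · obtain ⟨p₀, hp₀⟩ := hV.2.2.1.2.1
    exact ⟨p₀, fun p hp => by simp only [hp₀ p hp, Submodule.comap_top]⟩
  · obtain ⟨p₁, hp₁⟩ := hV.2.2.1.2.2
    exact ⟨p₁, fun p hp => by
      show Submodule.comap ι (F' p) = ⊥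
      rw [hp₁ p hp, Submodule.comap_bot]; exact Submodule.ker_subtype K⟩
  intro k p
  -- element-wise "sup" statement in the kernel
  have key : ∀ u : V, u ∈ K → u ∈ W k →
      ∃ a b : V, a ∈ K ∧ a ∈ F p ⊓ W k ∧ b ∈ K ∧ b ∈ F' (k + 1 - p) ⊓ W k ∧
        u - a - b ∈ W (k - 1) := by
    intro u huK huW
    obtain ⟨p₀, hp₀⟩ := hV.2.1.2.1
    have hu' : u ∈ F (min p₀ p) ⊓ W k := ⟨by rw [hp₀ _ (min_le_left _ _)]; trivial, huW⟩
    obtain ⟨s, c, hc, hsum⟩ := dSum_decompose (dExists hV k (min p₀ p) hu')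
    have hker : ∀ i ∈ s, c i ∈ K := by
      have := dUnique hV' s (fun i => f (c i))
        (fun i hi => dI_map f hfW hfF hfF' (hc i hi).1)
        (by rw [← map_sum, hsum]; exact huK)
      intro i hi
      exact LinearMap.mem_ker.2 (this i hi)
    -- the F-part
    set A := s.filter (fun i => p ≤ i.1 ∧ i.1 + i.2 = k) with hA
    set B := s.filter (fun i => (¬ p ≤ i.1) ∧ i.1 + i.2 = k) with hB
    set C := s.filter (fun i => ¬ i.1 + i.2 = k) with hC
    have hsplit : ∑ i ∈ A, c i + ∑ i ∈ B, c i + ∑ i ∈ C, c i = u := by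
      rw [hA, hB, hC]
      rw [← Finset.sum_filter_add_sum_filter_not s (fun i => i.1 + i.2 = k) c] at hsum
      rw [← hsum]
      congr 1
      rw [← Finset.sum_filter_add_sum_filter_not
        (s.filter (fun i => i.1 + i.2 = k)) (fun i => p ≤ i.1) c]
      congr 1
      · rw [Finset.filter_filter]
        apply Finset.sum_congr _ (fun _ _ => rfl)
        apply Finset.filter_congr
        intro i _; tauto
      · rw [Finset.filter_filter]
        apply Finset.sum_congr _ (fun _ _ => rfl)
        apply Finset.filter_congr
        intro i _; tauto
    -- B-part: correct each piece into F' ∩ ker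
    have hBex : ∀ i : ℤ × ℤ, ∃ v : V,
        i ∈ B → (v ∈ F' (k + 1 - p) ⊓ W k ∧ v ∈ K ∧ c i - v ∈ W (k - 1)) := by
      intro i
      by_cases hiB : i ∈ B
      · rw [hB, Finset.mem_filter] at hiB
        obtain ⟨his, hip, hik⟩ := hiB
        obtain ⟨x, hx, hw⟩ := dI_split hV.1.1 hV.2.2.1.1 0 (hc i his).1
        have hx' : x ∈ F' i.2 ⊓ W k := by
          have e1 : i.2 - ((0 : ℕ) : ℤ) = i.2 := by push_cast; ring
          have e2 : i.1 + i.2 = k := hik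
          rwa [e1, e2] at hx
        have hw' : c i - x ∈ W (k - 2) := by
          have e : i.1 + i.2 - ((0 : ℕ) : ℤ) - 2 = k - 2 := by push_cast; omega
          rwa [e] at hw
        have hfx : f x ∈ W' (k - 1) := by
          have h1 : f x = f (c i) - f (c i - x) := by rw [map_sub]; abel
          have h2 : f (c i) = 0 := LinearMap.mem_ker.1 (hker i his)
          rw [h1, h2, zero_sub]
          exact Submodule.neg_mem _
            (inc_mono hV'.1.1 (by omega) (hfW _ ⟨c i - x, hw', rfl⟩))
        obtain ⟨y, hy, hfy⟩ := strict (isCMHS_swap hV) (isCMHS_swap hV') f hfW hfF' hfF hx' hfx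
        refine ⟨x - y, fun _ => ⟨⟨?_, ?_⟩, ?_, ?_⟩⟩
        · exact dec_anti hV.2.2.1.1 (by omega) (Submodule.sub_mem _ hx'.1 hy.1)
        · exact Submodule.sub_mem _ hx'.2 (inc_mono hV.1.1 (by omega) hy.2)
        · exact LinearMap.mem_ker.2 (by rw [map_sub, hfy, sub_self])
        · have e : c i - (x - y) = (c i - x) + y := by abel
          rw [e]
          exact Submodule.add_mem _ (inc_mono hV.1.1 (by omega) hw') hy.2
      · exact ⟨0, fun h => absurd h hiB⟩
    choose g hg using hBex
    refine ⟨∑ i ∈ A, c i, ∑ i ∈ B, g i, ?_, ⟨?_, ?_⟩, ?_, ⟨?_, ?_⟩, ?_⟩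
    · exact Submodule.sum_mem _ fun i hi => hker i (Finset.mem_of_mem_filter i hi)
    · refine Submodule.sum_mem _ fun i hi => ?_
      rw [hA, Finset.mem_filter] at hi
      exact dec_anti hV.2.1.1 hi.2.1 (dI_le_F (hc i hi.1).1)
    · refine Submodule.sum_mem _ fun i hi => ?_
      rw [hA, Finset.mem_filter] at hi
      have := dI_le_W (hc i hi.1).1
      rwa [hi.2.2] at this
    · exact Submodule.sum_mem _ fun i hi => (hg i hi).2.1
    · exact Submodule.sum_mem _ fun i hi => (hg i hi).1.1
    · exact Submodule.sum_mem _ fun i hi => (hg i hi).1.2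
    · have e : u - ∑ i ∈ A, c i - ∑ i ∈ B, g i
          = (∑ i ∈ B, (c i - g i)) + ∑ i ∈ C, c i := by
        rw [Finset.sum_sub_distrib, ← hsplit]; abel
      rw [e]
      refine Submodule.add_mem _ ?_ ?_
      · exact Submodule.sum_mem _ fun i hi => (hg i hi).2.2
      · refine Submodule.sum_mem _ fun i hi => ?_
        rw [hC, Finset.mem_filter] at hi
        have h1 := (hc i hi.1).2.2
        exact inc_mono hV.1.1 (by omega) (dI_le_W (hc i hi.1).1)
  -- now prove the two lattice conditions
  dsimp only
  constructor
  · refine le_antisymm (sup_le (Submodule.map_mono inf_le_right)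
      (Submodule.map_mono inf_le_right)) ?_
    rintro x hx
    obtain ⟨u, hu, rfl⟩ := Submodule.mem_map.1 hx
    have huW : (u : V) ∈ W k := Submodule.mem_comap.1 hu
    obtain ⟨a, b, haK, haFW, hbK, hbFW, hab⟩ := key (u : V) u.2 huW
    set Q := ((W (k - 1)).comap ι)
    set Aa : K := ⟨a, haK⟩
    set Bb : K := ⟨b, hbK⟩
    have h0 : Q.mkQ (u - Aa - Bb) = 0 := by
      rw [Submodule.mkQ_apply, Submodule.Quotient.mk_eq_zero]
      show ι (u - Aa - Bb) ∈ W (k - 1)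
      exact hab
    have heq : Q.mkQ u = Q.mkQ Aa + Q.mkQ Bb := by
      have := h0
      rw [map_sub, map_sub, sub_sub, sub_eq_zero] at this
      exact this
    rw [heq]
    refine Submodule.add_mem_sup (Submodule.mem_map_of_mem ⟨haFW.1, haFW.2⟩)
      (Submodule.mem_map_of_mem ⟨hbFW.1, hbFW.2⟩)
  · rw [eq_bot_iff]
    rintro x ⟨hx1, hx2⟩
    obtain ⟨Aa, hAa, hxA⟩ := Submodule.mem_map.1 hx1
    obtain ⟨Bb, hBb, hxB⟩ := Submodule.mem_map.1 hx2
    set Q := ((W (k - 1)).comap ι)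
    have hABq : Q.mkQ (Aa - Bb) = 0 := by
      rw [map_sub, hxA, hxB, sub_self]
    have hAB : (Aa : V) - (Bb : V) ∈ W (k - 1) := by
      rw [Submodule.mkQ_apply, Submodule.Quotient.mk_eq_zero] at hABq
      exact hABq
    have hAw : (Aa : V) ∈ W (k - 1) :=
      grk_inf_elt (hV.2.2.2 k) p ⟨hAa.1, hAa.2⟩ ⟨hBb.1, hBb.2⟩ hAB
    have : Aa ∈ Q := hAw
    rw [← hxA, Submodule.mem_bot, Submodule.mkQ_apply, Submodule.Quotient.mk_eq_zero]
    exact this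
end

section
/- Every complex mixed Hodge structure admits a splitting of the pair (W, F) (a Deligne splitting): for every ℂ-MHS (V, W, F, F') there exists a family of subspaces I^{p,q} ⊆ V indexed by (p,q) ∈ ℤ × ℤ, with all but finitely many equal to 0, such that V is the internal direct sum of the I^{p,q}, W_k = ⊕_{p+q ≤ k} I^{p,q} for every k ∈ ℤ, and F^p = ⊕_{p' ≥ p, q ∈ ℤ} I^{p',q} for every p ∈ ℤ. -/
section DeligneAux

variable {V : Type*} [AddCommGroup V] [Module ℂ V]

/-- In a vector space, any submodule `B ≤ A` admits a complement within `A`. -/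
lemma exists_compl_within (B A : Submodule ℂ V) (h : B ≤ A) :
    ∃ C : Submodule ℂ V, C ≤ A ∧ C ⊓ B = ⊥ ∧ C ⊔ B = A := by
  obtain ⟨C', hC'⟩ := Submodule.exists_isCompl (B.comap A.subtype)
  have hB : (B.comap A.subtype).map A.subtype = B := by
    rw [Submodule.map_comap_subtype, inf_eq_right.mpr h]
  refine ⟨C'.map A.subtype, Submodule.map_subtype_le _ _, ?_, ?_⟩
  · rw [← hB, ← Submodule.map_inf _ (Submodule.injective_subtype A),
      (disjoint_comm.mp hC'.disjoint).eq_bot, Submodule.map_bot]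
  · rw [← hB, ← Submodule.map_sup, (codisjoint_comm.mp hC'.codisjoint).eq_top,
      Submodule.map_top, Submodule.range_subtype]

variable (W F : ℤ → Submodule ℂ V) (J : ℤ → ℤ → Submodule ℂ V)

/-- Spanning lemma: the pieces `J p' k'` for `p' ≥ p`, `k' ≤ k` span `F p ⊓ W k`. -/
lemma deligne_span (hF : ∀ p, F (p + 1) ≤ F p) (hW : ∀ k, W (k - 1) ≤ W k)
    {p₁ k₀ : ℤ} (hFbot : ∀ p ≥ p₁, F p = ⊥) (hWbot : ∀ k ≤ k₀, W k = ⊥)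
    (hJ1 : ∀ p k, J p k ≤ F p ⊓ W k)
    (hJ3 : ∀ p k, J p k ⊔ ((F (p + 1) ⊓ W k) ⊔ (F p ⊓ W (k - 1))) = F p ⊓ W k) :
    ∀ p k : ℤ, F p ⊓ W k = ⨆ p', ⨆ _ : p ≤ p', ⨆ k', ⨆ _ : k' ≤ k, J p' k' := by
  have base : ∀ p k : ℤ, (p₁ ≤ p ∨ k ≤ k₀) →
      F p ⊓ W k = ⨆ p', ⨆ _ : p ≤ p', ⨆ k', ⨆ _ : k' ≤ k, J p' k' := by
    intro p k hpk
    have hbot : F p ⊓ W k = ⊥ := by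
      rcases hpk with h | h
      · rw [hFbot p h, bot_inf_eq]
      · rw [hWbot k h, inf_bot_eq]
    rw [hbot, eq_comm, eq_bot_iff]
    refine iSup_le fun p' => iSup_le fun hp' => iSup_le fun k' => iSup_le fun hk' => ?_
    refine (hJ1 p' k').trans ?_
    rcases hpk with h | h
    · rw [hFbot p' (le_trans h hp')]
      exact inf_le_left
    · rw [hWbot k' (le_trans hk' h)]
      exact inf_le_right
  suffices H : ∀ n : ℕ, ∀ p k : ℤ, p₁ - p + (k - k₀) ≤ (n : ℤ) →
      F p ⊓ W k = ⨆ p', ⨆ _ : p ≤ p', ⨆ k', ⨆ _ : k' ≤ k, J p' k' by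
    intro p k
    exact H (p₁ - p + (k - k₀)).toNat p k (Int.self_le_toNat _)
  intro n
  induction n with
  | zero =>
    intro p k hm
    refine base p k ?_
    by_contra hc
    push_neg at hc
    omega
  | succ n ih =>
    intro p k hm
    by_cases hb : p₁ ≤ p ∨ k ≤ k₀
    · exact base p k hb
    push_neg at hb
    have e1 := (hJ3 p k).symm
    have e2 := ih (p + 1) k (by omega)
    have e3 := ih p (k - 1) (by omega)
    rw [e1, e2, e3]
    apply le_antisymm
    · refine sup_le ?_ (sup_le ?_ ?_)
      · exact le_iSup_of_le p (le_iSup_of_le le_rfl (le_iSup_of_le k (le_iSup_of_le le_rfl le_rfl)))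
      · exact iSup_le fun p' => iSup_le fun hp' =>
          le_iSup_of_le p' (le_iSup_of_le (by omega) le_rfl)
      · refine iSup_le fun p' => iSup_le fun hp' => le_iSup_of_le p' (le_iSup_of_le hp' ?_)
        exact iSup_le fun k' => iSup_le fun hk' =>
          le_iSup_of_le k' (le_iSup_of_le (by omega) le_rfl)
    · refine iSup_le fun p' => iSup_le fun hp' => iSup_le fun k' => iSup_le fun hk' => ?_
      by_cases h1 : p + 1 ≤ p'
      · refine le_sup_of_le_right (le_sup_of_le_left ?_)
        exact le_iSup_of_le p' (le_iSup_of_le h1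
          (le_iSup_of_le k' (le_iSup_of_le hk' le_rfl)))
      by_cases h2 : k' ≤ k - 1
      · refine le_sup_of_le_right (le_sup_of_le_right ?_)
        exact le_iSup_of_le p' (le_iSup_of_le hp'
          (le_iSup_of_le k' (le_iSup_of_le h2 le_rfl)))
      obtain rfl : p' = p := by omega
      obtain rfl : k' = k := by omega
      exact le_sup_left

/-- The key modular-type inequality. -/
lemma deligne_inf_le (hF : ∀ p, F (p + 1) ≤ F p) (p k : ℤ) :
    (F p ⊓ W k) ⊓ (W (k - 1) ⊔ (F (p + 1) ⊓ W k)) ≤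
      (F (p + 1) ⊓ W k) ⊔ (F p ⊓ W (k - 1)) := by
  rintro x ⟨hx1, hx2⟩
  obtain ⟨w, hw, f, hf, rfl⟩ := Submodule.mem_sup.mp hx2
  have hxF : w + f ∈ F p := hx1.1
  have hwF : w ∈ F p := by
    have := (F p).sub_mem hxF (hF p hf.1)
    simpa using this
  exact Submodule.add_mem _ (Submodule.mem_sup_right ⟨hwF, hw⟩) (Submodule.mem_sup_left hf)

set_option maxHeartbeats 1000000 in
/-- Independence of the pieces. -/
lemma deligne_indep (hF : ∀ p, F (p + 1) ≤ F p) (hW : ∀ k, W (k - 1) ≤ W k)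
    (hJ1 : ∀ p k, J p k ≤ F p ⊓ W k)
    (hJ2 : ∀ p k, J p k ⊓ ((F (p + 1) ⊓ W k) ⊔ (F p ⊓ W (k - 1))) = ⊥) :
    iSupIndep (fun pk : ℤ × ℤ => J pk.1 pk.2) := by
  classical
  have hFa : Antitone F := antitone_int_of_succ_le hF
  have hWm : Monotone W := monotone_int_of_le_succ (fun n => by simpa using hW (n + 1))
  apply iSupIndep_of_dfinsupp_lsum_injective
  rw [← LinearMap.ker_eq_bot, LinearMap.ker_eq_bot']
  intro v hv
  by_contra hne
  have hsupp : v.support.Nonempty := by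
    rw [Finset.nonempty_iff_ne_empty]
    intro h
    exact hne (DFinsupp.support_eq_empty.mp h)
  -- the sum of the coordinates is zero
  have hsum : ∑ c ∈ v.support, ((v c : V)) = 0 := by
    have : (DFinsupp.lsum ℕ (M := fun pk : ℤ × ℤ => ↥(J pk.1 pk.2))
        (fun pk => (J pk.1 pk.2).subtype)) v = ∑ c ∈ v.support, ((v c : V)) := by
      rw [DFinsupp.lsum_apply_apply, DFinsupp.sumAddHom_apply]
      rfl
    rw [← this, hv]
  -- pick the lexicographically extremal element of the support
  have himg : (v.support.image Prod.snd).Nonempty := hsupp.image _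
  set k₂ := (v.support.image Prod.snd).max' himg with hk₂
  have hs : (v.support.filter (fun c => c.2 = k₂)).Nonempty := by
    obtain ⟨c, hc, hc2⟩ := Finset.mem_image.mp ((v.support.image Prod.snd).max'_mem himg)
    exact ⟨c, Finset.mem_filter.mpr ⟨hc, hc2⟩⟩
  have himg2 : ((v.support.filter (fun c => c.2 = k₂)).image Prod.fst).Nonempty :=
    hs.image _
  set p₂ := ((v.support.filter (fun c => c.2 = k₂)).image Prod.fst).min' himg2 with hp₂
  have hbmem : (p₂, k₂) ∈ v.support := by
    obtain ⟨c, hc, hc1⟩ := Finset.mem_image.mp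
      (((v.support.filter (fun c => c.2 = k₂)).image Prod.fst).min'_mem himg2)
    have hc2 := (Finset.mem_filter.mp hc).2
    have : c = (p₂, k₂) := Prod.ext hc1 hc2
    exact this ▸ (Finset.mem_filter.mp hc).1
  -- every other coordinate lies in W (k₂ - 1) ⊔ (F (p₂ + 1) ⊓ W k₂)
  have hrest : ∀ c ∈ v.support.erase (p₂, k₂),
      ((v c : V)) ∈ W (k₂ - 1) ⊔ (F (p₂ + 1) ⊓ W k₂) := by
    intro c hc
    have hcs : c ∈ v.support := Finset.mem_of_mem_erase hc
    have hcne : c ≠ (p₂, k₂) := Finset.ne_of_mem_erase hc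
    have hmemJ : ((v c : V)) ∈ J c.1 c.2 := (v c).2
    by_cases h2 : c.2 = k₂
    · have hcf : c ∈ v.support.filter (fun c => c.2 = k₂) := Finset.mem_filter.mpr ⟨hcs, h2⟩
      have hple : p₂ ≤ c.1 := Finset.min'_le _ _ (Finset.mem_image_of_mem _ hcf)
      have hpne : c.1 ≠ p₂ := by
        intro h
        exact hcne (Prod.ext h h2)
      have : J c.1 c.2 ≤ F (p₂ + 1) ⊓ W k₂ := by
        refine (hJ1 c.1 c.2).trans (inf_le_inf (hFa (by omega)) ?_)
        rw [h2]
      exact Submodule.mem_sup_right (this hmemJ)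
    · have hkle : c.2 ≤ k₂ := Finset.le_max' _ _ (Finset.mem_image_of_mem _ hcs)
      have : J c.1 c.2 ≤ W (k₂ - 1) :=
        (hJ1 c.1 c.2).trans (inf_le_right.trans (hWm (by omega)))
      exact Submodule.mem_sup_left (this hmemJ)
  have hbv : ((v (p₂, k₂) : V)) = - ∑ c ∈ v.support.erase (p₂, k₂), ((v c : V)) := by
    have h0 := Finset.add_sum_erase v.support (fun c => ((v c : V))) hbmem
    rw [hsum] at h0
    exact eq_neg_of_add_eq_zero_left h0
  have hmemM : ((v (p₂, k₂) : V)) ∈ W (k₂ - 1) ⊔ (F (p₂ + 1) ⊓ W k₂) := by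
    rw [hbv]
    exact Submodule.neg_mem _ (Submodule.sum_mem _ hrest)
  have hmemB : ((v (p₂, k₂) : V)) ∈ (F (p₂ + 1) ⊓ W k₂) ⊔ (F p₂ ⊓ W (k₂ - 1)) :=
    deligne_inf_le W F hF p₂ k₂ ⟨hJ1 p₂ k₂ (v (p₂, k₂)).2, hmemM⟩
  have hbot : ((v (p₂, k₂) : V)) ∈ (⊥ : Submodule ℂ V) := by
    rw [← hJ2 p₂ k₂]
    exact ⟨(v (p₂, k₂)).2, hmemB⟩
  have hz : v (p₂, k₂) = 0 := by
    ext
    simpa using hbot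
  exact (DFinsupp.mem_support_iff.mp hbmem) hz

end DeligneAux

/-- Deligne splitting: every complex mixed Hodge structure admits a bigrading
`V = ⊕ I^{p,q}` splitting the pair `(W, F)`: `W_k = ⊕_{p+q ≤ k} I^{p,q}` and
`F^p = ⊕_{p' ≥ p} I^{p',q}`. -/
theorem cmhs_deligne_splitting
    (V : Type*) [AddCommGroup V] [Module ℂ V] [FiniteDimensional ℂ V]
    (W F F' : ℤ → Submodule ℂ V) (hmhs : IsCMHS W F F') :
    ∃ I : ℤ × ℤ → Submodule ℂ V,
      {pq : ℤ × ℤ | I pq ≠ ⊥}.Finite ∧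
      DirectSum.IsInternal I ∧
      (∀ k : ℤ, W k = ⨆ pq : ℤ × ℤ, ⨆ _ : pq.1 + pq.2 ≤ k, I pq) ∧
      (∀ p : ℤ, F p = ⨆ pq : ℤ × ℤ, ⨆ _ : p ≤ pq.1, I pq) := by
  obtain ⟨⟨hW1, ⟨k₀, hWbot⟩, ⟨k₁, hWtop⟩⟩, ⟨hF1, ⟨p₀, hFtop⟩, ⟨p₁, hFbot⟩⟩, -, -⟩ := hmhs
  have hFa : Antitone F := antitone_int_of_succ_le hF1
  have hWm : Monotone W := monotone_int_of_le_succ (fun n => by simpa using hW1 (n + 1))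
  have hBA : ∀ p k : ℤ, (F (p + 1) ⊓ W k) ⊔ (F p ⊓ W (k - 1)) ≤ F p ⊓ W k := fun p k =>
    sup_le (inf_le_inf_right _ (hF1 p)) (inf_le_inf_left _ (hW1 k))
  choose J hJle hJinf hJsup using fun p k =>
    exists_compl_within ((F (p + 1) ⊓ W k) ⊔ (F p ⊓ W (k - 1))) (F p ⊓ W k) (hBA p k)
  have hspan := deligne_span W F J hF1 hW1 hFbot hWbot hJle hJsup
  -- vanishing of the pieces outside a finite box
  have hJbot : ∀ p k : ℤ, (p < p₀ ∨ p₁ ≤ p ∨ k ≤ k₀ ∨ k₁ < k) → J p k = ⊥ := by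
    intro p k h
    rcases h with h | h | h | h
    · have hAB : F p ⊓ W k ≤ (F (p + 1) ⊓ W k) ⊔ (F p ⊓ W (k - 1)) := by
        refine le_sup_of_le_left ?_
        rw [hFtop (p + 1) (by omega), top_inf_eq]
        exact inf_le_right
      rw [eq_bot_iff, ← hJinf p k]
      exact le_inf le_rfl ((hJle p k).trans hAB)
    · rw [eq_bot_iff]
      refine (hJle p k).trans ?_
      rw [hFbot p h, bot_inf_eq]
    · rw [eq_bot_iff]
      refine (hJle p k).trans ?_
      rw [hWbot k h, inf_bot_eq]
    · have hAB : F p ⊓ W k ≤ (F (p + 1) ⊓ W k) ⊔ (F p ⊓ W (k - 1)) := by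
        refine le_sup_of_le_right ?_
        rw [hWtop (k - 1) (by omega)]
        exact le_inf inf_le_left le_top
      rw [eq_bot_iff, ← hJinf p k]
      exact le_inf le_rfl ((hJle p k).trans hAB)
  refine ⟨fun pq => J pq.1 (pq.1 + pq.2), ?_, ?_, ?_, ?_⟩
  · -- finiteness
    refine Set.Finite.subset ((Set.finite_Icc p₀ p₁).prod
      (Set.finite_Icc (k₀ - p₁) (k₁ - p₀))) ?_
    rintro ⟨p, q⟩ h
    simp only [Set.mem_setOf_eq] at h
    have h1 : ¬ (p < p₀ ∨ p₁ ≤ p ∨ p + q ≤ k₀ ∨ k₁ < p + q) := fun hc => h (hJbot p (p + q) hc)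
    push_neg at h1
    exact ⟨Set.mem_Icc.mpr ⟨by omega, by omega⟩, Set.mem_Icc.mpr ⟨by omega, by omega⟩⟩
  · -- internal direct sum
    have hind : iSupIndep (fun pk : ℤ × ℤ => J pk.1 pk.2) :=
      deligne_indep W F J hF1 hW1 hJle hJinf
    have hinj : Function.Injective (fun pq : ℤ × ℤ => (pq.1, pq.1 + pq.2)) := by
      rintro ⟨a, b⟩ ⟨c, d⟩ h
      simp only [Prod.mk.injEq] at h
      exact Prod.ext h.1 (by omega)
    have hindI : iSupIndep (fun pq : ℤ × ℤ => J pq.1 (pq.1 + pq.2)) := hind.comp hinj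
    have htop : ⨆ pq : ℤ × ℤ, J pq.1 (pq.1 + pq.2) = ⊤ := by
      rw [eq_top_iff]
      have : (⊤ : Submodule ℂ V) = F p₀ ⊓ W k₁ := by
        rw [hFtop p₀ le_rfl, hWtop k₁ le_rfl, top_inf_eq]
      rw [this, hspan p₀ k₁]
      refine iSup_le fun p' => iSup_le fun _ => iSup_le fun k' => iSup_le fun _ => ?_
      have : J p' k' = J p' (p' + (k' - p')) := by rw [show p' + (k' - p') = k' by ring]
      rw [this]
      exact le_iSup (fun pq : ℤ × ℤ => J pq.1 (pq.1 + pq.2)) (p', k' - p')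
    exact DirectSum.isInternal_submodule_of_iSupIndep_of_iSup_eq_top hindI htop
  · -- weight filtration
    intro k
    apply le_antisymm
    · have : W k = F p₀ ⊓ W k := by rw [hFtop p₀ le_rfl, top_inf_eq]
      rw [this, hspan p₀ k]
      refine iSup_le fun p' => iSup_le fun _ => iSup_le fun k' => iSup_le fun hk' => ?_
      have he : J p' k' = J p' (p' + (k' - p')) := by rw [show p' + (k' - p') = k' by ring]
      rw [he]
      exact le_iSup_of_le (p', k' - p') (le_iSup_of_le (by omega) le_rfl)
    · refine iSup_le fun pq => iSup_le fun h => ?_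
      exact (hJle pq.1 (pq.1 + pq.2)).trans (inf_le_right.trans (hWm h))
  · -- Hodge filtration
    intro p
    apply le_antisymm
    · have : F p = F p ⊓ W k₁ := by rw [hWtop k₁ le_rfl, inf_top_eq]
      rw [this, hspan p k₁]
      refine iSup_le fun p' => iSup_le fun hp' => iSup_le fun k' => iSup_le fun _ => ?_
      have he : J p' k' = J p' (p' + (k' - p')) := by rw [show p' + (k' - p') = k' by ring]
      rw [he]
      exact le_iSup_of_le (p', k' - p') (le_iSup_of_le hp' le_rfl)
    · refine iSup_le fun pq => iSup_le fun h => ?_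
      exact (hJle pq.1 (pq.1 + pq.2)).trans (inf_le_left.trans (hFa h))
end
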